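/- arXiv:1602.02486 — 12 statements merged into one kernel-verified Lean document; each statement's English description precedes it below -/
import Mathlib

section
/- Let X be a Hausdorff locally convex topological vector space, V ⊆ X a convex set, and U ⊆ V a self-segment-dense set in V (i.e., U is dense in V and for all x, y ∈ U the set [x,y] ∩ U is dense in the segment [x,y]). Then for every finite subset {u₁,...,uₙ} ⊆ U, the closure of (conv{u₁,...,uₙ} ∩ U) equals conv{u₁,...,uₙ}. -/
/-!
Induction on the finite set. Every point of `conv (insert a t)` lies on a segment `[a, y]` with
`y ∈ conv t`, and by induction `y` is a limit of points `z ∈ conv t ∩ U`. The map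
`z ↦ (1 - θ) • a + θ • z` is continuous and sends each such `z` into the closure of
`[a, z] ∩ U ⊆ conv (insert a t) ∩ U` by self-segment-density, so it sends `y` there too.
The reverse inclusion holds because the convex hull of a finite set is compact, hence closed.
-/

theorem segment_subset_closure_inter_of_mem_closure {𝕜 X : Type*} [Semiring 𝕜] [PartialOrder 𝕜]
    [AddCommMonoid X] [Module 𝕜 X] [TopologicalSpace X] [ContinuousAdd X]
    [ContinuousConstSMul 𝕜 X] {U : Set X}
    (hssd : ∀ x ∈ U, ∀ y ∈ U, segment 𝕜 x y ⊆ closure (segment 𝕜 x y ∩ U))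
    {C : Set X} (hC : Convex 𝕜 C) {x y : X} (hxC : x ∈ C) (hxU : x ∈ U)
    (hy : y ∈ closure (C ∩ U)) :
    segment 𝕜 x y ⊆ closure (C ∩ U) := by
  rintro _ ⟨α, β, hα, hβ, hαβ, rfl⟩
  have hmaps : Set.MapsTo (fun z => α • x + β • z) (C ∩ U) (closure (C ∩ U)) := by
    intro z hz
    have hseg : α • x + β • z ∈ segment 𝕜 x z := ⟨α, β, hα, hβ, hαβ, rfl⟩
    exact closure_mono (Set.inter_subset_inter_left U (hC.segment_subset hxC hz.1))
      (hssd x hxU z hz.2 hseg)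
  simpa using map_mem_closure (continuous_const.add (continuous_const_smul β)) hy hmaps

theorem convexHull_subset_closure_convexHull_inter {𝕜 X : Type*} [Field 𝕜] [LinearOrder 𝕜]
    [IsStrictOrderedRing 𝕜] [AddCommGroup X] [Module 𝕜 X] [TopologicalSpace X] [ContinuousAdd X]
    [ContinuousConstSMul 𝕜 X] {U : Set X}
    (hssd : ∀ x ∈ U, ∀ y ∈ U, segment 𝕜 x y ⊆ closure (segment 𝕜 x y ∩ U))
    (s : Finset X) (hs : ↑s ⊆ U) :
    convexHull 𝕜 (↑s : Set X) ⊆ closure (convexHull 𝕜 (↑s : Set X) ∩ U) := by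
  classical
  induction s using Finset.induction_on with
  | empty => simp
  | @insert a t _ ih =>
    have haU : a ∈ U := hs (by simp)
    have ih' := ih ((Finset.coe_subset.mpr (Finset.subset_insert a t)).trans hs)
    rcases t.eq_empty_or_nonempty with rfl | ht
    · simpa using subset_closure (s := {a} ∩ U) ⟨rfl, haU⟩
    have hmono : convexHull 𝕜 (↑t : Set X) ⊆ convexHull 𝕜 ↑(insert a t) :=
      convexHull_mono (by simp [Set.subset_insert])
    have haK : a ∈ convexHull 𝕜 (↑(insert a t) : Set X) := subset_convexHull 𝕜 _ (by simp)
    intro x hx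
    rw [Finset.coe_insert, convexHull_insert (Finset.coe_nonempty.mpr ht),
      convexJoin_singleton_left, Set.mem_iUnion₂] at hx
    obtain ⟨y, hy, hxy⟩ := hx
    have hyK : y ∈ closure (convexHull 𝕜 ↑(insert a t) ∩ U) :=
      closure_mono (Set.inter_subset_inter_left U hmono) (ih' hy)
    exact segment_subset_closure_inter_of_mem_closure hssd (convex_convexHull 𝕜 _) haK haU hyK hxy

theorem closure_convexHull_finset_inter_of_selfSegmentDense_general
    {X : Type*} [AddCommGroup X] [Module ℝ X] [TopologicalSpace X]
    [IsTopologicalAddGroup X] [ContinuousSMul ℝ X] [T2Space X]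
    (U : Set X)
    (hssd : ∀ x ∈ U, ∀ y ∈ U, segment ℝ x y ⊆ closure (segment ℝ x y ∩ U))
    (s : Finset X) (hs : ↑s ⊆ U) :
    closure (convexHull ℝ (↑s : Set X) ∩ U) = convexHull ℝ (↑s : Set X) := by
  refine subset_antisymm ?_ (convexHull_subset_closure_convexHull_inter hssd s hs)
  have hclosed : IsClosed (convexHull ℝ (↑s : Set X)) :=
    (s.finite_toSet.isCompact_convexHull (𝕜 := ℝ)).isClosed
  exact hclosed.closure_subset_iff.mpr Set.inter_subset_left

/-- Lemma 2.3 (Lemma 2.1 of [LaVi1]): if `U` is self-segment-dense in the convex set `V`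
of a real Hausdorff locally convex topological vector space, then for every finite subset
`{u₁,…,uₙ} ⊆ U` one has `cl(conv{u₁,…,uₙ} ∩ U) = conv{u₁,…,uₙ}`. -/
theorem closure_convexHull_finset_inter_of_selfSegmentDense
    {X : Type*} [AddCommGroup X] [Module ℝ X] [TopologicalSpace X]
    [IsTopologicalAddGroup X] [ContinuousSMul ℝ X] [LocallyConvexSpace ℝ X] [T2Space X]
    (V U : Set X) (hV : Convex ℝ V) (hUV : U ⊆ V) (hdense : V ⊆ closure U)
    (hssd : ∀ x ∈ U, ∀ y ∈ U, segment ℝ x y ⊆ closure (segment ℝ x y ∩ U))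
    (s : Finset X) (hs : ↑s ⊆ U) :
    closure (convexHull ℝ (↑s : Set X) ∩ U) = convexHull ℝ (↑s : Set X) :=
  closure_convexHull_finset_inter_of_selfSegmentDense_general U hssd s hs
end

section
/- Let X be a Hausdorff locally convex topological vector space, V ⊆ X a convex set, and U ⊆ V self-segment-dense in V. Then for every subset S ⊆ U, the closure of (conv(S) ∩ U) equals the closed convex hull of S. In particular, conv(S) ∩ U is self-segment-dense in conv(S). -/
/-! Segments between points of `C = conv(S) ∩ U` are in the closure of `C`, since `U` is dense
in each of them; by continuity of `(x, y) ↦ a • x + b • y` the closure of `C` is then convex,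
so it contains `conv(S)`. -/

open Set

section

variable {𝕜 E : Type*} [Semiring 𝕜] [PartialOrder 𝕜] [AddCommMonoid E] [Module 𝕜 E]
  [TopologicalSpace E]

theorem convex_closure_of_segment_subset_closure [ContinuousAdd E]
    [ContinuousConstSMul 𝕜 E] {s : Set E}
    (h : ∀ x ∈ s, ∀ y ∈ s, segment 𝕜 x y ⊆ closure s) : Convex 𝕜 (closure s) := by
  intro x hx y hy a b ha hb hab
  let f : E → E → E := fun x' y' => a • x' + b • y'
  have hf : Continuous (Function.uncurry f) :=
    (continuous_fst.const_smul _).add (continuous_snd.const_smul _)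
  rw [← closure_closure (s := s)]
  exact map_mem_closure₂ (f := f) hf hx hy fun x' hx' y' hy' =>
    h x' hx' y' hy' ⟨a, b, ha, hb, hab, rfl⟩

theorem Convex.segment_subset_closure_segment_inter_inter {K U : Set E} (hK : Convex 𝕜 K)
    (hU : ∀ x ∈ U, ∀ y ∈ U, segment 𝕜 x y ⊆ closure (segment 𝕜 x y ∩ U)) :
    ∀ x ∈ K ∩ U, ∀ y ∈ K ∩ U, segment 𝕜 x y ⊆ closure (segment 𝕜 x y ∩ (K ∩ U)) := by
  intro x hx y hy
  have hseg : segment 𝕜 x y ∩ U = segment 𝕜 x y ∩ (K ∩ U) := by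
    rw [← inter_assoc, inter_eq_left.mpr (hK.segment_subset hx.1 hy.1)]
  exact hseg ▸ hU x hx.2 y hy.2

end

theorem closure_convexHull_inter_of_selfSegmentDense_general
    {X : Type*} [AddCommGroup X] [Module ℝ X] [TopologicalSpace X]
    [IsTopologicalAddGroup X] [ContinuousSMul ℝ X]
    (U : Set X)
    (hssd : ∀ x ∈ U, ∀ y ∈ U, segment ℝ x y ⊆ closure (segment ℝ x y ∩ U))
    (S : Set X) (hS : S ⊆ U) :
    closure (convexHull ℝ S ∩ U) = closure (convexHull ℝ S) ∧
      ((convexHull ℝ S ∩ U ⊆ convexHull ℝ S) ∧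
        (convexHull ℝ S ⊆ closure (convexHull ℝ S ∩ U)) ∧
        ∀ x ∈ convexHull ℝ S ∩ U, ∀ y ∈ convexHull ℝ S ∩ U,
          segment ℝ x y ⊆ closure (segment ℝ x y ∩ (convexHull ℝ S ∩ U))) := by
  have hssdC := (convex_convexHull ℝ S).segment_subset_closure_segment_inter_inter hssd
  have hconv : Convex ℝ (closure (convexHull ℝ S ∩ U)) :=
    convex_closure_of_segment_subset_closure fun x hx y hy =>
      (hssdC x hx y hy).trans (closure_mono inter_subset_right)
  have hhull : convexHull ℝ S ⊆ closure (convexHull ℝ S ∩ U) :=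
    convexHull_min (fun s hs => subset_closure ⟨subset_convexHull ℝ S hs, hS hs⟩) hconv
  exact ⟨(closure_mono inter_subset_left).antisymm (closure_minimal hhull isClosed_closure),
    inter_subset_left, hhull, hssdC⟩

/-- Lemma 2.4: if `U` is self-segment-dense in the convex set `V`, then for every
`S ⊆ U` one has `cl(conv(S) ∩ U) = cl(conv(S))` (the closed convex hull of `S`);
in particular `conv(S) ∩ U` is self-segment-dense in `conv(S)`. -/
theorem closure_convexHull_inter_of_selfSegmentDense
    {X : Type*} [AddCommGroup X] [Module ℝ X] [TopologicalSpace X]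
    [IsTopologicalAddGroup X] [ContinuousSMul ℝ X] [LocallyConvexSpace ℝ X] [T2Space X]
    (V U : Set X) (hV : Convex ℝ V) (hUV : U ⊆ V) (hdense : V ⊆ closure U)
    (hssd : ∀ x ∈ U, ∀ y ∈ U, segment ℝ x y ⊆ closure (segment ℝ x y ∩ U))
    (S : Set X) (hS : S ⊆ U) :
    closure (convexHull ℝ S ∩ U) = closure (convexHull ℝ S) ∧
      ((convexHull ℝ S ∩ U ⊆ convexHull ℝ S) ∧
        (convexHull ℝ S ⊆ closure (convexHull ℝ S ∩ U)) ∧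
        ∀ x ∈ convexHull ℝ S ∩ U, ∀ y ∈ convexHull ℝ S ∩ U,
          segment ℝ x y ⊆ closure (segment ℝ x y ∩ (convexHull ℝ S ∩ U))) :=
  closure_convexHull_inter_of_selfSegmentDense_general U hssd S hS
end

section
/- In an infinite-dimensional real Hilbert space X, the unit sphere U = {x : ‖x‖ = 1} is dense in the closed unit ball B = {x : ‖x‖ ≤ 1} with respect to the weak topology, but U is not self-segment-dense in B: for any x with ‖x‖ = 1, the segment [−x, x] intersects U exactly in {−x, x}. -/
/-!
A basic weak neighbourhood of `y` is cut out by finitely many functionals, so it contains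
`y + z` for every `z` in their common kernel, which is nontrivial in infinite dimensions.
Moving from a point of the ball along a nonzero such `z`, the intermediate value theorem
reaches the sphere. On the other hand, `[-x, x]` consists of the multiples `s • x` with
`|s| ≤ 1`, and `‖s • x‖ = |s|` when `‖x‖ = 1`.
-/

open Set

theorem toWeakSpace_mem_closure_image_of_forall_finset {𝕜 E : Type*} [CommSemiring 𝕜]
    [TopologicalSpace 𝕜] [ContinuousAdd 𝕜] [ContinuousConstSMul 𝕜 𝕜] [AddCommMonoid E]
    [Module 𝕜 E] [TopologicalSpace E] {S : Set E} {y : E}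
    (h : ∀ I : Finset (E →L[𝕜] 𝕜), ∃ s ∈ S, ∀ f ∈ I, f s = f y) :
    toWeakSpace 𝕜 E y ∈ closure (toWeakSpace 𝕜 E '' S) := by
  rw [mem_closure_iff]
  intro O hO hyO
  obtain ⟨V, hV, rfl⟩ := isOpen_induced_iff.mp hO
  obtain ⟨I, u, hu, hIu⟩ := isOpen_pi_iff.mp hV _ hyO
  obtain ⟨s, hsS, hs⟩ := h I
  refine ⟨toWeakSpace 𝕜 E s, hIu fun f hf => ?_, s, hsS, rfl⟩
  change f s ∈ u f
  exact hs f hf ▸ (hu f hf).2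

theorem exists_ne_zero_forall_eq_zero {K E ι : Type*} [Field K] [AddCommGroup E] [Module K E]
    [Finite ι] (hE : ¬ FiniteDimensional K E) (f : ι → E →ₗ[K] K) :
    ∃ z : E, z ≠ 0 ∧ ∀ i, f i z = 0 := by
  have hker : LinearMap.ker (LinearMap.pi f) ≠ ⊥ := fun h =>
    hE (FiniteDimensional.of_injective _ (LinearMap.ker_eq_bot.mp h))
  obtain ⟨z, hz, hz0⟩ := Submodule.ne_bot_iff _ |>.mp hker
  exact ⟨z, hz0, fun i => congrFun (LinearMap.mem_ker.mp hz) i⟩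

theorem exists_norm_add_smul_eq {E : Type*} [NormedAddCommGroup E] [NormedSpace ℝ E]
    {y z : E} {r : ℝ} (hy : ‖y‖ ≤ r) (hz : z ≠ 0) : ∃ t : ℝ, ‖y + t • z‖ = r := by
  set T := (r + ‖y‖) / ‖z‖
  have hzpos : 0 < ‖z‖ := norm_pos_iff.mpr hz
  have hT0 : 0 ≤ T := div_nonneg (by linarith [norm_nonneg y]) hzpos.le
  have hTz : ‖T • z‖ = r + ‖y‖ := by
    rw [norm_smul, Real.norm_of_nonneg hT0, div_mul_cancel₀ _ hzpos.ne']
  have hT : r ≤ ‖y + T • z‖ := by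
    linarith [add_comm (T • z) y ▸ norm_le_add_norm_add (T • z) y]
  exact intermediate_value_univ 0 T (by fun_prop) ⟨by simpa using hy, hT⟩

theorem segment_neg_eq_image_smul {E : Type*} [AddCommGroup E] [Module ℝ E] (x : E) :
    segment ℝ (-x) x = (fun s : ℝ => s • x) '' Icc (-1) 1 := by
  rw [← segment_eq_Icc (by norm_num)]
  simpa using (image_segment ℝ (LinearMap.toSpanSingleton ℝ E x).toAffineMap (-1) 1).symm

theorem segment_neg_inter_sphere {E : Type*} [NormedAddCommGroup E] [NormedSpace ℝ E] (x : E) :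
    segment ℝ (-x) x ∩ {z : E | ‖z‖ = ‖x‖} = {-x, x} := by
  rcases eq_or_ne x 0 with rfl | hx
  · simp
  ext z
  constructor
  · rintro ⟨hz, hnorm⟩
    rw [segment_neg_eq_image_smul] at hz
    obtain ⟨s, -, rfl⟩ := hz
    have hs : |s| = 1 := by
      simpa [norm_smul, norm_ne_zero_iff.mpr hx] using hnorm
    rcases abs_eq zero_le_one |>.mp hs with rfl | rfl <;> simp
  · rintro (rfl | rfl)
    · exact ⟨left_mem_segment ℝ _ _, norm_neg x⟩
    · exact ⟨right_mem_segment ℝ _ _, rfl⟩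

theorem sphere_weakly_dense_not_selfSegmentDense_general
    {X : Type*} [NormedAddCommGroup X] [InnerProductSpace ℝ X]
    (hinf : ¬ FiniteDimensional ℝ X) :
    (toWeakSpace ℝ X '' {x : X | ‖x‖ ≤ 1} ⊆
        closure (toWeakSpace ℝ X '' {x : X | ‖x‖ = 1})) ∧
      ∀ x : X, ‖x‖ = 1 →
        segment ℝ (-x) x ∩ {z : X | ‖z‖ = 1} = {-x, x} := by
  refine ⟨?_, fun x hx => hx ▸ segment_neg_inter_sphere x⟩
  rintro _ ⟨y, hy, rfl⟩
  refine toWeakSpace_mem_closure_image_of_forall_finset fun I => ?_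
  obtain ⟨z, hz0, hz⟩ := exists_ne_zero_forall_eq_zero hinf fun f : I => (f.1 : X →ₗ[ℝ] ℝ)
  obtain ⟨t, ht⟩ := exists_norm_add_smul_eq hy hz0
  exact ⟨y + t • z, ht, fun f hf => by simp [show f z = 0 from hz ⟨f, hf⟩]⟩

/-- Example 2.5: in an infinite-dimensional real Hilbert space, the unit sphere `U` is
dense in the closed unit ball `B` for the weak topology, but `U` is not self-segment-
dense in `B`: for any `x` with `‖x‖ = 1`, the segment `[-x, x]` meets `U` exactly
in `{-x, x}`. -/
theorem sphere_weakly_dense_not_selfSegmentDense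
    {X : Type*} [NormedAddCommGroup X] [InnerProductSpace ℝ X] [CompleteSpace X]
    (hinf : ¬ FiniteDimensional ℝ X) :
    (toWeakSpace ℝ X '' {x : X | ‖x‖ ≤ 1} ⊆
        closure (toWeakSpace ℝ X '' {x : X | ‖x‖ = 1})) ∧
      ∀ x : X, ‖x‖ = 1 →
        segment ℝ (-x) x ∩ {z : X | ‖z‖ = 1} = {-x, x} :=
  sphere_weakly_dense_not_selfSegmentDense_general hinf
end

section
/- Let U = {x ∈ l² : |x₁| < sup_{n≥2} n|xₙ|}. Then U is open and dense in l² (with the norm topology). -/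
/-!
`U` is the set where a continuous function stays strictly below a supremum of continuous
functions, hence open. For density, move `x` by `ε / 2` in a coordinate `n - 1` so far out that
`|x (n - 1)| < ε / 4` and `n ε / 4 > |x 0|`; the moved point then lies in `U`.
-/

open Filter
open scoped ENNReal Topology

theorem isOpen_setOf_lt_biSup {X ι α : Type*} [TopologicalSpace X] [CompleteLinearOrder α]
    [TopologicalSpace α] [OrderClosedTopology α] {p : ι → Prop} {g : X → α} {f : ι → X → α}
    (hg : Continuous g) (hf : ∀ i, p i → Continuous (f i)) :
    IsOpen {x | g x < ⨆ (i) (_ : p i), f i x} := by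
  simp_rw [lt_iSup_iff, Set.ofPred_exists]
  exact isOpen_biUnion fun i hi => isOpen_lt hg (hf i hi)

theorem Memℓp.tendsto_norm_cofinite_zero {α : Type*} {E : α → Type*}
    [∀ i, NormedAddCommGroup (E i)] {p : ℝ≥0∞} {f : ∀ i, E i} (hf : Memℓp f p)
    (hp : 0 < p.toReal) : Tendsto (fun i => ‖f i‖) cofinite (𝓝 0) := by
  have h := (hf.summable hp).tendsto_cofinite_zero.rpow_const (p := p.toReal⁻¹)
    (Or.inr (inv_nonneg.2 hp.le))
  rw [Real.zero_rpow (inv_ne_zero hp.ne')] at h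
  exact h.congr fun i => Real.rpow_rpow_inv (norm_nonneg _) hp.ne'

namespace lp

variable {α : Type*} {E : α → Type*} [∀ i, NormedAddCommGroup (E i)] {p : ℝ≥0∞} [Fact (1 ≤ p)]

@[fun_prop]
theorem continuous_apply (i : α) : Continuous fun x : lp E p => x i :=
  (_root_.continuous_apply i).comp uniformContinuous_coe.continuous

end lp

theorem exists_mem_ball_norm_lt_nat_mul_norm {p : ℝ≥0∞} [Fact (1 ≤ p)] (hp : p ≠ ∞)
    (x : lp (fun _ : ℕ => ℝ) p) {ε : ℝ} (hε : 0 < ε) :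
    ∃ y ∈ Metric.ball x ε, ∃ n ≥ 2, ‖y 0‖ < n * ‖y (n - 1)‖ := by
  have hp0 : 0 < p.toReal := ENNReal.toReal_pos (zero_lt_one.trans_le Fact.out).ne' hp
  have hsmall : ∀ᶠ n : ℕ in atTop, ‖x (n - 1)‖ < ε / 4 :=
    (tendsto_sub_atTop_nat 1).eventually <| (Nat.cofinite_eq_atTop ▸
      (lp.memℓp x).tendsto_norm_cofinite_zero hp0).eventually_lt_const (by positivity)
  have hlarge : ∀ᶠ n : ℕ in atTop, ‖x 0‖ < n * (ε / 4) :=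
    (tendsto_natCast_atTop_atTop.atTop_mul_const (by positivity)).eventually_gt_atTop _
  obtain ⟨n, hn, hxn, hx0⟩ := ((eventually_ge_atTop 2).and (hsmall.and hlarge)).exists
  refine ⟨x + lp.single p (n - 1) (ε / 2), ?_, n, hn, ?_⟩
  · rw [Metric.mem_ball, dist_eq_norm, add_sub_cancel_left,
      lp.norm_single (zero_lt_one.trans_le Fact.out), Real.norm_of_nonneg (by positivity)]
    linarith
  · have h0 : (0 : ℕ) ≠ n - 1 := by omega
    simp only [lp.coeFn_add, Pi.add_apply, lp.single_apply_self, lp.single_apply_ne _ _ _ h0,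
      add_zero]
    calc ‖x 0‖ < n * (ε / 4) := hx0
      _ ≤ n * ‖x (n - 1) + ε / 2‖ := by
        gcongr
        rw [Real.norm_eq_abs] at hxn ⊢
        linarith [neg_abs_le (x (n - 1)), le_abs_self (x (n - 1) + ε / 2)]

/-- Example 2.6 (first part): the set `U = {x ∈ l² : |x₁| < sup_{n ≥ 2} n|xₙ|}` is open
and dense in `l²` (norm topology).  Sequences are indexed from `0` in Lean, so the
`n`-th term `xₙ` (n ≥ 1) of the paper is `x (n-1)` here, and the supremum is taken
in `[0,∞]`. -/
theorem open_dense_set_lp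
    (U : Set (lp (fun _ : ℕ => ℝ) 2))
    (hU : U = {x : lp (fun _ : ℕ => ℝ) 2 |
      (‖x 0‖₊ : ℝ≥0∞) < ⨆ (n : ℕ) (_ : 2 ≤ n), (n : ℝ≥0∞) * (‖x (n - 1)‖₊ : ℝ≥0∞)}) :
    IsOpen U ∧ Dense U := by
  subst hU
  refine ⟨isOpen_setOf_lt_biSup (by fun_prop) fun n _ => by fun_prop (disch := simp), ?_⟩
  refine Metric.dense_iff.2 fun x ε hε => ?_
  obtain ⟨y, hy, n, hn, hlt⟩ := exists_mem_ball_norm_lt_nat_mul_norm ENNReal.ofNat_ne_top x hε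
  refine ⟨y, hy, ?_⟩
  simp only [Set.mem_ofPred_eq, lt_iSup_iff]
  exact ⟨n, hn, by exact_mod_cast hlt⟩
end

section
/- Let U = {x ∈ l² : |x₁| < sup_{n≥2} n|xₙ|}. Then U is not self-segment-dense in l²: for x = (1, 1, 1/9, ..., 1/n², ...) and y = (1, −1, 1/18, ..., 1/(2n²), ...), both in U, the point (1−t)x + t y lies outside U for every t ∈ [1/4, 3/4]. -/
/-!
Both `x` and `y` lie in `U` thanks to their second coordinate alone: `|±1| · 2 > 1`.
Along the segment that coordinate becomes `1 - 2t`, which is at most `1/2` in absolute value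
for `t ∈ [1/4, 3/4]`, while the tail coordinates `(1 - t/2)/n²` give `n |zₙ| ≤ 1`; so the
weighted supremum of `z = (1-t)x + ty` is at most `1 = |z₁|`.
-/

open scoped ENNReal

/-- With zero-based indices this is `sup_{m ≥ 1} (m + 1) |f m|`. -/
noncomputable def tailWeightedSup (f : ℕ → ℝ) : ℝ≥0∞ :=
  ⨆ (n : ℕ) (_ : 2 ≤ n), (n : ℝ≥0∞) * (‖f (n - 1)‖₊ : ℝ≥0∞)

lemma coe_nnnorm_eq_ofReal_abs (r : ℝ) : (‖r‖₊ : ℝ≥0∞) = ENNReal.ofReal |r| :=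
  Real.enorm_eq_ofReal_abs r

lemma natCast_mul_nnnorm_eq_ofReal (n : ℕ) (r : ℝ) :
    (n : ℝ≥0∞) * (‖r‖₊ : ℝ≥0∞) = ENNReal.ofReal (n * |r|) := by
  rw [ENNReal.ofReal_mul (Nat.cast_nonneg n), ENNReal.ofReal_natCast, coe_nnnorm_eq_ofReal_abs]

lemma nnnorm_lt_tailWeightedSup {f : ℕ → ℝ} (h : |f 0| < 2 * |f 1|) :
    (‖f 0‖₊ : ℝ≥0∞) < tailWeightedSup f := by
  refine lt_of_lt_of_le ?_ (le_iSup₂_of_le 2 le_rfl le_rfl)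
  rw [natCast_mul_nnnorm_eq_ofReal, coe_nnnorm_eq_ofReal_abs,
    ENNReal.ofReal_lt_ofReal_iff_of_nonneg (abs_nonneg _)]
  exact_mod_cast h

lemma tailWeightedSup_le_nnnorm {f : ℕ → ℝ}
    (h : ∀ n : ℕ, 1 ≤ n → ((n : ℝ) + 1) * |f n| ≤ |f 0|) :
    tailWeightedSup f ≤ ‖f 0‖₊ := by
  refine iSup₂_le fun n hn => ?_
  obtain ⟨m, rfl⟩ : ∃ m, n = m + 1 := ⟨n - 1, by omega⟩
  rw [natCast_mul_nnnorm_eq_ofReal, coe_nnnorm_eq_ofReal_abs]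
  exact ENNReal.ofReal_le_ofReal (by exact_mod_cast h m (by omega))

lemma succ_mul_abs_lineMap_le_one {x y : ℕ → ℝ} (hx1 : x 1 = 1)
    (hxn : ∀ n : ℕ, 2 ≤ n → x n = 1 / ((n : ℝ) + 1) ^ 2) (hy1 : y 1 = -1)
    (hyn : ∀ n : ℕ, 2 ≤ n → y n = 1 / (2 * ((n : ℝ) + 1) ^ 2))
    {t : ℝ} (ht : t ∈ Set.Icc (1 / 4 : ℝ) (3 / 4)) {n : ℕ} (hn : 1 ≤ n) :
    ((n : ℝ) + 1) * |(1 - t) * x n + t * y n| ≤ 1 := by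
  obtain ⟨ht₁, ht₂⟩ := ht
  obtain rfl | hn₂ := hn.eq_or_lt
  · have hcoord : (1 - t) * x 1 + t * y 1 = 1 - 2 * t := by rw [hx1, hy1]; ring
    have : |1 - 2 * t| ≤ 1 / 2 := abs_le.2 ⟨by linarith, by linarith⟩
    rw [hcoord]
    push_cast
    linarith
  · have hpos : (0 : ℝ) < (n : ℝ) + 1 := by positivity
    have hcoord : (1 - t) * x n + t * y n = (1 - t / 2) / ((n : ℝ) + 1) ^ 2 := by
      rw [hxn n hn₂, hyn n hn₂]
      field_simp
      ring
    rw [hcoord, abs_of_nonneg (div_nonneg (by linarith) (by positivity))]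
    calc ((n : ℝ) + 1) * ((1 - t / 2) / ((n : ℝ) + 1) ^ 2) = (1 - t / 2) / ((n : ℝ) + 1) := by
          field_simp
      _ ≤ 1 := by
          rw [div_le_one hpos]
          linarith

/-- Indexing from `0`: the paper's `xₙ` is `x (n-1)` here. -/
theorem not_selfSegmentDense_lp
    (U : Set (lp (fun _ : ℕ => ℝ) 2))
    (hU : U = {z : lp (fun _ : ℕ => ℝ) 2 |
      (‖z 0‖₊ : ℝ≥0∞) < ⨆ (n : ℕ) (_ : 2 ≤ n), (n : ℝ≥0∞) * (‖z (n - 1)‖₊ : ℝ≥0∞)})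
    (x y : lp (fun _ : ℕ => ℝ) 2)
    (hx0 : x 0 = 1) (hx1 : x 1 = 1)
    (hxn : ∀ n : ℕ, 2 ≤ n → x n = 1 / ((n : ℝ) + 1) ^ 2)
    (hy0 : y 0 = 1) (hy1 : y 1 = -1)
    (hyn : ∀ n : ℕ, 2 ≤ n → y n = 1 / (2 * ((n : ℝ) + 1) ^ 2)) :
    x ∈ U ∧ y ∈ U ∧
      ∀ t ∈ Set.Icc (1 / 4 : ℝ) (3 / 4), (1 - t) • x + t • y ∉ U := by
  subst hU
  refine ⟨nnnorm_lt_tailWeightedSup ?_, nnnorm_lt_tailWeightedSup ?_, ?_⟩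
  · norm_num [hx0, hx1]
  · norm_num [hy0, hy1]
  · intro t ht hmem
    have hz : ∀ n, ((1 - t) • x + t • y) n = (1 - t) * x n + t * y n := fun _ => rfl
    have hz0 : ((1 - t) • x + t • y) 0 = 1 := by rw [hz, hx0, hy0]; ring
    refine (hmem : _ < tailWeightedSup _).not_ge (tailWeightedSup_le_nnnorm fun n hn => ?_)
    rw [hz0, abs_one, hz]
    exact succ_mul_abs_lineMap_le_one hx1 hxn hy1 hyn ht hn
end

section
/- Let U = {x ∈ l² : |x₁| < sup_{n≥2} n|xₙ|}. Then U is segment-dense in l²: for every y ∈ l² there exists x ∈ U such that the half-open segment [x, y) is contained in U (in particular y is a cluster point of [y,x] ∩ U). -/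
/-!
Put `F a = sup_{n ≥ 2} n |a_{n-1}| ∈ [0, ∞]`, an extended seminorm on sequences; since `|z₀| < ∞`,
every `z` with `F z = ∞` lies in `U`. The sequence `w_m = (m+1)^{-3/4}` is in `l²` with `F w = ∞`.
For a given `y`, `F (y + s w) < ∞` for at most one `s`, since two such values `s ≠ s'` would make
`F ((s - s') w) = ∞` finite. Hence for small `c > 0` the whole half-open segment
`{y + s w : 0 < s ≤ c}` lies in `U`, and `x = y + c w` works.
-/

open scoped ENNReal

open Filter Set

lemma clusterPt_segment_inter_of_forall_mem {E : Type*} [AddCommGroup E] [Module ℝ E]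
    [TopologicalSpace E] [ContinuousAdd E] [ContinuousSMul ℝ E] {U : Set E} {x y : E}
    (h : ∀ t ∈ Ioo (0 : ℝ) 1, (1 - t) • y + t • x ∈ U) :
    ClusterPt y (𝓟 (segment ℝ y x ∩ U)) := by
  rw [← mem_closure_iff_clusterPt]
  have hsub : openSegment ℝ y x ⊆ segment ℝ y x ∩ U := by
    intro z hz
    refine ⟨openSegment_subset_segment ℝ y x hz, ?_⟩
    rw [openSegment_eq_image] at hz
    obtain ⟨t, ht, rfl⟩ := hz
    exact h t ht
  exact closure_mono hsub (segment_subset_closure_openSegment (left_mem_segment ℝ y x))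

section ExtendedSeminorm

variable {E : Type*} [AddCommGroup E] [Module ℝ E] {F : E → ℝ≥0∞}

lemma eq_of_add_smul_ne_top (hadd : ∀ a b, F (a + b) ≤ F a + F b)
    (hsmul : ∀ (c : ℝ) a, F (c • a) = ‖c‖₊ * F a) {w : E} (hw : F w = ⊤) (y : E) {s s' : ℝ}
    (hs : F (y + s • w) ≠ ⊤) (hs' : F (y + s' • w) ≠ ⊤) : s = s' := by
  by_contra hne
  have key : F ((s - s') • w) ≤ F (y + s • w) + F (y + s' • w) := calc
    F ((s - s') • w) = F ((y + s • w) + (-1 : ℝ) • (y + s' • w)) := by congr 1; module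
    _ ≤ F (y + s • w) + F ((-1 : ℝ) • (y + s' • w)) := hadd _ _
    _ = F (y + s • w) + F (y + s' • w) := by rw [hsmul]; simp
  rw [hsmul, hw, ENNReal.mul_top (by simpa using sub_ne_zero.mpr hne), top_le_iff] at key
  exact ENNReal.add_ne_top.mpr ⟨hs, hs'⟩ key

lemma exists_pos_forall_add_smul_eq_top (hadd : ∀ a b, F (a + b) ≤ F a + F b)
    (hsmul : ∀ (c : ℝ) a, F (c • a) = ‖c‖₊ * F a) {w : E} (hw : F w = ⊤) (y : E) :
    ∃ c > (0 : ℝ), ∀ s ∈ Ioc 0 c, F (y + s • w) = ⊤ := by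
  by_cases hfin : ∃ s₀ > (0 : ℝ), F (y + s₀ • w) ≠ ⊤
  · obtain ⟨s₀, hs₀, hfin⟩ := hfin
    refine ⟨s₀ / 2, half_pos hs₀, fun s hs => ?_⟩
    by_contra hs'
    have := eq_of_add_smul_ne_top hadd hsmul hw y hs' hfin
    linarith [hs.2]
  · push Not at hfin
    exact ⟨1, one_pos, fun s hs => hfin s hs.1⟩

end ExtendedSeminorm

noncomputable def weightedSup (a : ℕ → ℝ) : ℝ≥0∞ :=
  ⨆ (n : ℕ) (_ : 2 ≤ n), (n : ℝ≥0∞) * ‖a (n - 1)‖₊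

lemma le_weightedSup (a : ℕ → ℝ) {n : ℕ} (hn : 2 ≤ n) :
    (n : ℝ≥0∞) * ‖a (n - 1)‖₊ ≤ weightedSup a :=
  le_iSup₂ (f := fun (n : ℕ) (_ : 2 ≤ n) => (n : ℝ≥0∞) * ‖a (n - 1)‖₊) n hn

lemma weightedSup_add_le (a b : ℕ → ℝ) : weightedSup (a + b) ≤ weightedSup a + weightedSup b := by
  refine iSup₂_le fun n hn => ?_
  calc (n : ℝ≥0∞) * ‖(a + b) (n - 1)‖₊
      ≤ (n : ℝ≥0∞) * (‖a (n - 1)‖₊ + ‖b (n - 1)‖₊) := by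
        gcongr
        exact_mod_cast nnnorm_add_le _ _
    _ = (n : ℝ≥0∞) * ‖a (n - 1)‖₊ + (n : ℝ≥0∞) * ‖b (n - 1)‖₊ := mul_add _ _ _
    _ ≤ weightedSup a + weightedSup b := add_le_add (le_weightedSup a hn) (le_weightedSup b hn)

lemma weightedSup_smul (c : ℝ) (a : ℕ → ℝ) : weightedSup (c • a) = ‖c‖₊ * weightedSup a := by
  simp only [weightedSup, ENNReal.mul_iSup, Pi.smul_apply, smul_eq_mul, nnnorm_mul,
    ENNReal.coe_mul]
  exact iSup_congr fun n => iSup_congr fun _ => mul_left_comm _ _ _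

lemma weightedSup_eq_top_of_forall_exists_le {a : ℕ → ℝ}
    (h : ∀ N : ℕ, ∃ n ≥ 2, (N : ℝ) ≤ n * ‖a (n - 1)‖) : weightedSup a = ⊤ := by
  rw [eq_top_iff, ← ENNReal.iSup_natCast]
  refine iSup_le fun N => ?_
  obtain ⟨n, hn, hN⟩ := h N
  refine le_trans ?_ (le_weightedSup a hn)
  rw [← ENNReal.ofReal_natCast, ← ENNReal.ofReal_natCast n, ← enorm_eq_nnnorm, ← ofReal_norm,
    ← ENNReal.ofReal_mul n.cast_nonneg]
  exact ENNReal.ofReal_le_ofReal hN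

noncomputable def slowDecay (m : ℕ) : ℝ := ((m : ℝ) + 1) ^ (-(3 / 4 : ℝ))

lemma memℓp_slowDecay : Memℓp slowDecay 2 := by
  rw [memℓp_gen_iff (by norm_num)]
  have hterm : ∀ m : ℕ, ‖slowDecay m‖ ^ (2 : ℝ≥0∞).toReal = ((m + 1 : ℕ) : ℝ) ^ (-(3 / 2 : ℝ)) := by
    intro m
    rw [slowDecay, Real.norm_of_nonneg (by positivity), ← Real.rpow_mul (by positivity)]
    norm_num
  simp only [hterm]
  exact (summable_nat_add_iff 1).mpr (Real.summable_nat_rpow.mpr (by norm_num))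

lemma weightedSup_slowDecay : weightedSup slowDecay = ⊤ := by
  refine weightedSup_eq_top_of_forall_exists_le fun N => ⟨(N + 2) ^ 4, ?_, ?_⟩
  · exact (by omega : 2 ≤ N + 2).trans (le_self_pow (by omega) (by norm_num))
  · have hx : (0 : ℝ) < N + 2 := by positivity
    have hcast : (((N + 2) ^ 4 - 1 : ℕ) : ℝ) + 1 = ((N : ℝ) + 2) ^ (4 : ℝ) := by
      rw [Nat.cast_sub (Nat.one_le_pow _ _ (by omega))]
      norm_num
    have hn : (((N + 2) ^ 4 : ℕ) : ℝ) = ((N : ℝ) + 2) ^ (4 : ℝ) := by norm_num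
    rw [slowDecay, hcast, hn, Real.norm_of_nonneg (by positivity), ← Real.rpow_mul hx.le,
      ← Real.rpow_add hx]
    norm_num

/-- Example 2.6 (third part): `U = {x ∈ l² : |x₁| < sup_{n≥2} n|xₙ|}` is segment-dense
in `l²`: for every `y ∈ l²` there exists `x ∈ U` with the half-open segment
`[x, y) ⊆ U`; in particular `y` is a cluster point of `[y,x] ∩ U`. -/
theorem segmentDense_lp
    (U : Set (lp (fun _ : ℕ => ℝ) 2))
    (hU : U = {z : lp (fun _ : ℕ => ℝ) 2 |
      (‖z 0‖₊ : ℝ≥0∞) < ⨆ (n : ℕ) (_ : 2 ≤ n), (n : ℝ≥0∞) * (‖z (n - 1)‖₊ : ℝ≥0∞)}) :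
    ∀ y : lp (fun _ : ℕ => ℝ) 2, ∃ x ∈ U,
      (∀ t ∈ Set.Ioc (0 : ℝ) 1, (1 - t) • y + t • x ∈ U) ∧
        ClusterPt y (Filter.principal (segment ℝ y x ∩ U)) := by
  intro y
  let w : lp (fun _ : ℕ => ℝ) 2 := ⟨slowDecay, memℓp_slowDecay⟩
  have mem_of_eq_top (z : lp (fun _ : ℕ => ℝ) 2) (hz : weightedSup z = ⊤) : z ∈ U :=
    hU ▸ show _ < weightedSup z from hz ▸ ENNReal.coe_lt_top
  obtain ⟨c, hc, hline⟩ := exists_pos_forall_add_smul_eq_top weightedSup_add_le weightedSup_smul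
    weightedSup_slowDecay y
  have hseg : ∀ t ∈ Ioc (0 : ℝ) 1, (1 - t) • y + t • (y + c • w) ∈ U := by
    intro t ht
    have hpoint : (1 - t) • y + t • (y + c • w) = y + (t * c) • w := by module
    apply mem_of_eq_top
    rw [hpoint, lp.coeFn_add, lp.coeFn_smul]
    exact hline (t * c) ⟨mul_pos ht.1 hc, mul_le_of_le_one_left hc.le ht.2⟩
  refine ⟨y + c • w, by simpa using hseg 1 ⟨one_pos, le_rfl⟩, hseg, ?_⟩
  exact clusterPt_segment_inter_of_forall_mem fun t ht => hseg t (Ioo_subset_Ioc_self ht)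
end

section
/- Let f : X → ℝ ∪ {±∞} be proper and lower semicontinuous on X, and U ⊆ dom f dense. Then f̄_U(u) = f(u) for all u ∈ U, dom f̄_U ⊆ dom f, f̄_U(x) ≥ f(x) for all x ∈ X, and f̄_U = f on X if and only if U is graphically dense in dom f. -/
/-!
Since `f` is lower semicontinuous, its epigraph is closed, so `epi f̄_U ⊆ epi f`, i.e. `f ≤ f̄_U`;
points `(u, f u)` with `u ∈ U` lie in `epi f̄_U`, so `f̄_U = f` on `U`. At a point `x` of `dom f`,
`f̄_U x ≤ f x` says that `(x, f x)` is in the closure of the epigraph of `f` over `U`. Along a net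
of that epigraph converging to `(x, f x)`, the values of `f` are squeezed between the lower
semicontinuity bound and the heights of the net, hence converge to `f x`: so `(x, f x)` is even in
the closure of the graph of `f` over `U`.
-/

open Filter Topology

section

variable {X γ : Type*} [TopologicalSpace X] [LinearOrder γ] [TopologicalSpace γ] [OrderTopology γ]

theorem LowerSemicontinuousAt.mem_closure_graph_of_mem_closure_epigraph {f : X → γ} {x : X}
    (hf : LowerSemicontinuousAt f x) {s : Set X}
    (hx : (x, f x) ∈ closure {p : X × γ | p.1 ∈ s ∧ f p.1 ≤ p.2}) :
    (x, f x) ∈ closure {p : X × γ | p.1 ∈ s ∧ p.2 = f p.1} := by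
  set l := 𝓝[{p : X × γ | p.1 ∈ s ∧ f p.1 ≤ p.2}] (x, f x)
  have : l.NeBot := mem_closure_iff_nhdsWithin_neBot.1 hx
  have hfst : Tendsto Prod.fst l (𝓝 x) := (continuous_fst.tendsto _).mono_left nhdsWithin_le_nhds
  have hsnd : Tendsto Prod.snd l (𝓝 (f x)) :=
    (continuous_snd.tendsto _).mono_left nhdsWithin_le_nhds
  have hmem : ∀ᶠ p in l, p.1 ∈ s ∧ f p.1 ≤ p.2 := eventually_mem_nhdsWithin
  have hf_tendsto : Tendsto (fun p : X × γ => f p.1) l (𝓝 (f x)) := by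
    refine tendsto_order.2 ⟨fun a ha => hfst.eventually (hf a ha), fun b hb => ?_⟩
    filter_upwards [hsnd.eventually (eventually_lt_nhds hb), hmem] with p hpb hp
    exact hp.2.trans_lt hpb
  exact mem_closure_of_tendsto (hfst.prodMk_nhds hf_tendsto) (hmem.mono fun p hp => ⟨hp.1, rfl⟩)

theorem LowerSemicontinuousAt.mem_closure_graph_iff_mem_closure_epigraph {f : X → γ} {x : X}
    (hf : LowerSemicontinuousAt f x) {s : Set X} :
    (x, f x) ∈ closure {p : X × γ | p.1 ∈ s ∧ p.2 = f p.1} ↔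
      (x, f x) ∈ closure {p : X × γ | p.1 ∈ s ∧ f p.1 ≤ p.2} :=
  have graph_subset : {p : X × γ | p.1 ∈ s ∧ p.2 = f p.1} ⊆ {p | p.1 ∈ s ∧ f p.1 ≤ p.2} :=
    fun _ hp => ⟨hp.1, hp.2.ge⟩
  ⟨(closure_mono graph_subset ·), hf.mem_closure_graph_of_mem_closure_epigraph⟩

end

namespace EReal

variable {X : Type*}

theorem closure_realEpigraph [TopologicalSpace X] {f : X → EReal} {s : Set X} :
    closure {p : X × ℝ | p.1 ∈ s ∧ f p.1 ≤ p.2} =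
      Prod.map id (↑) ⁻¹' closure {p : X × EReal | p.1 ∈ s ∧ f p.1 ≤ p.2} :=
  ((IsOpenMap.id.prodMap isOpenEmbedding_coe.isOpenMap).preimage_closure_eq_closure_preimage
    (continuous_id.prodMap continuous_coe_real_ereal) {p : X × EReal | p.1 ∈ s ∧ f p.1 ≤ p.2}).symm

theorem _root_.LowerSemicontinuous.isClosed_realEpigraph [TopologicalSpace X] {f : X → EReal}
    (hf : LowerSemicontinuous f) : IsClosed {p : X × ℝ | f p.1 ≤ p.2} :=
  hf.isClosed_epigraph.preimage (continuous_id.prodMap continuous_coe_real_ereal)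

theorem le_of_realEpigraph_subset {f g : X → EReal}
    (h : {p : X × ℝ | g p.1 ≤ p.2} ⊆ {p : X × ℝ | f p.1 ≤ p.2}) : f ≤ g :=
  fun x => le_of_forall_lt_iff_le.1 fun z hz => @h (x, z) hz.le

end EReal

theorem closure_epi_eq_iff_graphically_dense_general
    {X : Type*} [TopologicalSpace X]
    (f : X → EReal) (hproper : (∃ x, f x < ⊤) ∧ ∀ x, ⊥ < f x)
    (hlsc : LowerSemicontinuous f)
    (U : Set X) (hU : U ⊆ {x | f x < ⊤})
    (g : X → EReal)
    (hg : {p : X × ℝ | g p.1 ≤ (p.2 : EReal)} =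
      closure {p : X × ℝ | p.1 ∈ U ∧ f p.1 ≤ (p.2 : EReal)}) :
    (∀ u ∈ U, g u = f u) ∧
      {x | g x < ⊤} ⊆ {x | f x < ⊤} ∧
      (∀ x, f x ≤ g x) ∧
      (g = f ↔ ∀ x, f x < ⊤ →
        (x, f x) ∈ closure {p : X × EReal | p.1 ∈ U ∧ p.2 = f p.1}) := by
  have hfg : f ≤ g := EReal.le_of_realEpigraph_subset <|
    hg ▸ closure_minimal (fun _ hp => hp.2) hlsc.isClosed_realEpigraph
  have hg_le_iff : ∀ x, f x < ⊤ →
      (g x ≤ f x ↔ (x, f x) ∈ closure {p : X × EReal | p.1 ∈ U ∧ f p.1 ≤ p.2}) := by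
    intro x hx
    rw [← EReal.coe_toReal hx.ne (hproper.2 x).ne']
    exact Set.ext_iff.1 (hg.trans EReal.closure_realEpigraph) (x, _)
  refine ⟨fun u hu => le_antisymm ((hg_le_iff u (hU hu)).2 (subset_closure ⟨hu, le_rfl⟩)) (hfg u),
    fun x hx => (hfg x).trans_lt hx, hfg, ?_⟩
  calc g = f ↔ ∀ x, g x ≤ f x := ⟨fun h x => h.le x, fun h => le_antisymm h hfg⟩
    _ ↔ ∀ x, f x < ⊤ → g x ≤ f x :=
      forall_congr' fun x =>
        ⟨fun h _ => h, fun h => (le_top : f x ≤ ⊤).lt_or_eq.elim h fun hx => hx ▸ le_top⟩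
    _ ↔ _ := forall₂_congr fun x hx =>
      (hg_le_iff x hx).trans
        (hlsc.lowerSemicontinuousAt x).mem_closure_graph_iff_mem_closure_epigraph.symm

/-- Theorem 3.1(b): let `f : X → ℝ ∪ {±∞}` be proper and lower semicontinuous on `X`,
`U ⊆ dom f` dense in `dom f`, and let `f̄_U` (here `g`) be defined by
`epi f̄_U = cl{(u,r) ∈ U × ℝ : f(u) ≤ r}`.  Then `f̄_U = f` on `U`,
`dom f̄_U ⊆ dom f`, `f̄_U ≥ f` on `X`, and `f̄_U = f` on `X` if and only if `U`
is graphically dense in `dom f` (every `x ∈ dom f` is a limit of a net `(uᵢ) ⊆ U`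
with `f(uᵢ) → f(x)`, i.e. `(x, f x)` is in the closure of the graph of `f` over `U`). -/
theorem closure_epi_eq_iff_graphically_dense
    {X : Type*} [AddCommGroup X] [Module ℝ X] [TopologicalSpace X]
    [IsTopologicalAddGroup X] [ContinuousSMul ℝ X] [LocallyConvexSpace ℝ X] [T2Space X]
    (f : X → EReal) (hproper : (∃ x, f x < ⊤) ∧ ∀ x, ⊥ < f x)
    (hlsc : LowerSemicontinuous f)
    (U : Set X) (hU : U ⊆ {x | f x < ⊤}) (hdense : {x | f x < ⊤} ⊆ closure U)
    (g : X → EReal)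
    (hg : {p : X × ℝ | g p.1 ≤ (p.2 : EReal)} =
      closure {p : X × ℝ | p.1 ∈ U ∧ f p.1 ≤ (p.2 : EReal)}) :
    (∀ u ∈ U, g u = f u) ∧
      {x | g x < ⊤} ⊆ {x | f x < ⊤} ∧
      (∀ x, f x ≤ g x) ∧
      (g = f ↔ ∀ x, f x < ⊤ →
        (x, f x) ∈ closure {p : X × EReal | p.1 ∈ U ∧ p.2 = f p.1}) :=
  closure_epi_eq_iff_graphically_dense_general f hproper hlsc U hU g hg
end

section
/- Let X be a Hausdorff locally convex topological vector space, f : X → ℝ ∪ {±∞} proper with convex domain, U ⊆ dom f self-segment-dense in dom f, and suppose f is convex on U (i.e., f((1−t)u + t v) ≤ (1−t)f(u) + t f(v) whenever u, v ∈ U, t ∈ [0,1] and (1−t)u + t v ∈ U). Then f̄_U is convex, and epi f_U is self-segment-dense in epi f̄_U. -/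
/-!
Parametrize the segment from `(u, r)` to `(v, s)` in `X × ℝ` by `t ↦ lineMap (u, r) (v, s) t`.
Convexity of `f` on `U` puts this point in `epi f_U` whenever its first coordinate
`lineMap u v t` lies in `U`, and self-segment-density of `U` makes these parameters dense in
`[0, 1]` (the parametrization of `[u, v]` is a closed embedding when `u ≠ v`). Pushing forward
along the continuous parametrization gives self-segment-density of `epi f_U`, and a closure
containing all segments between points of the set it closes is convex.
-/

open Set Topology AffineMap

theorem convex_closure_of_forall_segment_subset_closure {E : Type*} [AddCommGroup E]
    [Module ℝ E] [TopologicalSpace E] [IsTopologicalAddGroup E] [ContinuousSMul ℝ E]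
    {A : Set E} (h : ∀ p ∈ A, ∀ q ∈ A, segment ℝ p q ⊆ closure A) :
    Convex ℝ (closure A) := by
  intro p hp q hq a b ha hb hab
  have hmaps : MapsTo (fun z : E × E => a • z.1 + b • z.2) (A ×ˢ A) (closure A) :=
    fun z hz => h z.1 hz.1 z.2 hz.2 ⟨a, b, ha, hb, hab, rfl⟩
  have hpq : (p, q) ∈ closure (A ×ˢ A) := by rw [closure_prod_eq]; exact ⟨hp, hq⟩
  simpa only [closure_closure] using map_mem_closure (by fun_prop) hpq hmaps

theorem Icc_subset_closure_inter_preimage_lineMap {E : Type*} [AddCommGroup E] [Module ℝ E]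
    [TopologicalSpace E] [IsTopologicalAddGroup E] [ContinuousSMul ℝ E] [T2Space E]
    {x y : E} {A : Set E} (h : segment ℝ x y ⊆ closure (segment ℝ x y ∩ A)) :
    Icc (0 : ℝ) 1 ⊆ closure (Icc 0 1 ∩ (lineMap x y : ℝ → E) ⁻¹' A) := by
  rcases eq_or_ne x y with rfl | hxy
  · have hx : x ∈ A := by
      by_contra hx
      simpa [segment_same, hx] using h (left_mem_segment ℝ x x)
    have hpre : (lineMap x x : ℝ → E) ⁻¹' A = univ := by ext; simp [hx]
    rw [hpre, inter_univ]
    exact subset_closure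
  · have hemb : IsClosedEmbedding (lineMap x y : ℝ → E) := by
      have := (Homeomorph.addRight x).isClosedEmbedding.comp
        (isClosedEmbedding_smul_left (𝕜 := ℝ) (sub_ne_zero.2 hxy.symm))
      convert this using 1
      ext t
      simp [lineMap_apply, vsub_eq_sub, vadd_eq_add]
    intro t ht
    rw [hemb.isInducing.closure_eq_preimage_closure_image, mem_preimage, image_inter_preimage,
      ← segment_eq_image_lineMap]
    exact h (segment_eq_image_lineMap ℝ x y ▸ mem_image_of_mem _ ht)

section Epigraph

variable {X : Type*} [AddCommGroup X] [Module ℝ X]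

def ConvexIneqOn (U : Set X) (f : X → EReal) : Prop :=
  ∀ u ∈ U, ∀ v ∈ U, ∀ t ∈ Icc (0 : ℝ) 1,
    (1 - t) • u + t • v ∈ U →
      f ((1 - t) • u + t • v) ≤ ((1 - t : ℝ) : EReal) * f u + (t : EReal) * f v

def epigraphOn (f : X → EReal) (U : Set X) : Set (X × ℝ) :=
  {p | p.1 ∈ U ∧ f p.1 ≤ (p.2 : EReal)}

variable {f : X → EReal} {U : Set X}

theorem lineMap_mem_epigraphOn
    (hconvU : ConvexIneqOn U f) {p q : X × ℝ} (hp : p ∈ epigraphOn f U)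
    (hq : q ∈ epigraphOn f U) {t : ℝ} (ht : t ∈ Icc (0 : ℝ) 1) (htU : lineMap p.1 q.1 t ∈ U) :
    lineMap p q t ∈ epigraphOn f U := by
  rw [lineMap_apply_module] at htU ⊢
  refine ⟨htU, ?_⟩
  have h1t : (0 : EReal) ≤ ((1 - t : ℝ) : EReal) := EReal.coe_nonneg.2 (sub_nonneg.2 ht.2)
  have ht0 : (0 : EReal) ≤ (t : EReal) := EReal.coe_nonneg.2 ht.1
  calc f ((1 - t) • p.1 + t • q.1)
      ≤ ((1 - t : ℝ) : EReal) * f p.1 + (t : EReal) * f q.1 := hconvU _ hp.1 _ hq.1 t ht htU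
    _ ≤ ((1 - t : ℝ) : EReal) * p.2 + (t : EReal) * q.2 :=
        add_le_add (mul_le_mul_of_nonneg_left hp.2 h1t) (mul_le_mul_of_nonneg_left hq.2 ht0)
    _ = (((1 - t) • p + t • q).2 : EReal) := by simp [smul_eq_mul]

variable [TopologicalSpace X] [IsTopologicalAddGroup X] [ContinuousSMul ℝ X] [T2Space X]

theorem segment_subset_closure_inter_epigraphOn
    (hssd : ∀ x ∈ U, ∀ y ∈ U, segment ℝ x y ⊆ closure (segment ℝ x y ∩ U))
    (hconvU : ConvexIneqOn U f) {p q : X × ℝ} (hp : p ∈ epigraphOn f U)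
    (hq : q ∈ epigraphOn f U) :
    segment ℝ p q ⊆ closure (segment ℝ p q ∩ epigraphOn f U) := by
  have hdense := Icc_subset_closure_inter_preimage_lineMap (hssd _ hp.1 _ hq.1)
  have hmaps : MapsTo (lineMap p q) (Icc (0 : ℝ) 1 ∩ lineMap p.1 q.1 ⁻¹' U)
      (segment ℝ p q ∩ epigraphOn f U) := fun t ht =>
    ⟨by rw [segment_eq_image_lineMap]; exact mem_image_of_mem _ ht.1,
      lineMap_mem_epigraphOn hconvU hp hq ht.1 ht.2⟩
  intro z hz
  rw [segment_eq_image_lineMap] at hz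
  obtain ⟨t, ht, rfl⟩ := hz
  exact map_mem_closure lineMap_continuous (hdense ht) hmaps

end Epigraph

theorem closure_epi_convex_of_selfSegmentDense_general
    {X : Type*} [AddCommGroup X] [Module ℝ X] [TopologicalSpace X]
    [IsTopologicalAddGroup X] [ContinuousSMul ℝ X] [T2Space X]
    (f : X → EReal)
    (U : Set X)
    (hssd : ∀ x ∈ U, ∀ y ∈ U, segment ℝ x y ⊆ closure (segment ℝ x y ∩ U))
    (hconvU : ∀ u ∈ U, ∀ v ∈ U, ∀ t ∈ Set.Icc (0 : ℝ) 1,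
      (1 - t) • u + t • v ∈ U →
        f ((1 - t) • u + t • v) ≤ ((1 - t : ℝ) : EReal) * f u + (t : EReal) * f v)
    (epiU : Set (X × ℝ))
    (hepiU : epiU = {p : X × ℝ | p.1 ∈ U ∧ f p.1 ≤ (p.2 : EReal)}) :
    Convex ℝ (closure epiU) ∧
      (epiU ⊆ closure epiU ∧
        ∀ p ∈ epiU, ∀ q ∈ epiU,
          segment ℝ p q ⊆ closure (segment ℝ p q ∩ epiU)) := by
  subst hepiU
  have hseg : ∀ p ∈ epigraphOn f U, ∀ q ∈ epigraphOn f U,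
      segment ℝ p q ⊆ closure (segment ℝ p q ∩ epigraphOn f U) :=
    fun p hp q hq => segment_subset_closure_inter_epigraphOn hssd hconvU hp hq
  exact ⟨convex_closure_of_forall_segment_subset_closure fun p hp q hq =>
      (hseg p hp q hq).trans (closure_mono inter_subset_right), subset_closure, hseg⟩

/-- Theorem 3.1(c): let `f : X → ℝ ∪ {±∞}` be proper with convex domain,
`U ⊆ dom f` self-segment-dense in `dom f`, and `f` convex on `U`
(i.e. `f((1-t)u + tv) ≤ (1-t)f(u) + tf(v)` whenever `u, v ∈ U`, `t ∈ [0,1]`, and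
`(1-t)u + tv ∈ U`).  Then `f̄_U` is convex (its epigraph, the closure of
`epi f_U`, is a convex set) and `epi f_U` is self-segment-dense in `epi f̄_U`. -/
theorem closure_epi_convex_of_selfSegmentDense
    {X : Type*} [AddCommGroup X] [Module ℝ X] [TopologicalSpace X]
    [IsTopologicalAddGroup X] [ContinuousSMul ℝ X] [LocallyConvexSpace ℝ X] [T2Space X]
    (f : X → EReal) (hproper : (∃ x, f x < ⊤) ∧ ∀ x, ⊥ < f x)
    (hdom : Convex ℝ {x | f x < ⊤})
    (U : Set X) (hU : U ⊆ {x | f x < ⊤}) (hdense : {x | f x < ⊤} ⊆ closure U)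
    (hssd : ∀ x ∈ U, ∀ y ∈ U, segment ℝ x y ⊆ closure (segment ℝ x y ∩ U))
    (hconvU : ∀ u ∈ U, ∀ v ∈ U, ∀ t ∈ Set.Icc (0 : ℝ) 1,
      (1 - t) • u + t • v ∈ U →
        f ((1 - t) • u + t • v) ≤ ((1 - t : ℝ) : EReal) * f u + (t : EReal) * f v)
    (epiU : Set (X × ℝ))
    (hepiU : epiU = {p : X × ℝ | p.1 ∈ U ∧ f p.1 ≤ (p.2 : EReal)}) :
    Convex ℝ (closure epiU) ∧
      (epiU ⊆ closure epiU ∧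
        ∀ p ∈ epiU, ∀ q ∈ epiU,
          segment ℝ p q ⊆ closure (segment ℝ p q ∩ epiU)) :=
  closure_epi_convex_of_selfSegmentDense_general f U hssd hconvU epiU hepiU
end

section
/- Let X be a Hausdorff locally convex topological vector space and f, g : X → ℝ ∪ {±∞} two proper, convex, lower semicontinuous functions. Let U ⊆ dom f ∩ dom g be segment-dense in dom f ∩ dom g with f(u) = g(u) for all u ∈ U. Then f = g on dom f ∩ dom g. -/
/-!
Let `x ∈ dom f ∩ dom g` and pick `u ∈ U` such that `x` is a cluster point of `[x, u] ∩ U`.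
Along `[x, u]` a convex function is upper semicontinuous at `x`, because it lies below the chord
from `(x, g x)` to `(u, g u)`; points of `[x, u]` near `x` have small parameter because
`t ↦ (1 - t) • x + t • u` embeds the compact `[0, 1]` into a Hausdorff space. Approaching `x` through `[x, u] ∩ U`, where `f = g`, lower
semicontinuity of `f` and this upper semicontinuity of `g` give `f x ≤ g x`; by symmetry `f x = g x`.
-/

open Filter Set Topology

theorem nhdsWithin_segment_eq_map_lineMap {E : Type*} [AddCommGroup E] [Module ℝ E]
    [TopologicalSpace E] [IsTopologicalAddGroup E] [ContinuousSMul ℝ E] [T2Space E] (x u : E) :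
    𝓝[segment ℝ x u] x = map (AffineMap.lineMap x u) (𝓝[Icc (0 : ℝ) 1] 0) := by
  by_cases hxu : x = u
  · subst hxu
    have : (𝓝[Icc (0 : ℝ) 1] 0).NeBot :=
      mem_closure_iff_nhdsWithin_neBot.mp (subset_closure (left_mem_Icc.mpr zero_le_one))
    rw [segment_same, nhdsWithin_singleton, AffineMap.lineMap_same]
    exact Filter.map_const.symm
  set e : Icc (0 : ℝ) 1 → E := AffineMap.lineMap x u ∘ Subtype.val
  have he : IsClosedEmbedding e :=
    (AffineMap.lineMap_continuous.comp continuous_subtype_val).isClosedEmbedding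
      ((AffineMap.lineMap_injective ℝ hxu).comp Subtype.val_injective)
  have hrange : range e = segment ℝ x u := by
    rw [segment_eq_image_lineMap, range_comp, Subtype.range_coe]
  have key := he.isInducing.map_nhds_eq ⟨0, left_mem_Icc.mpr zero_le_one⟩
  rw [hrange, ← map_map, map_nhds_subtype_val] at key
  simpa [e] using key.symm

theorem upperSemicontinuousWithinAt_segment_of_le_chord {E : Type*} [AddCommGroup E]
    [Module ℝ E] [TopologicalSpace E] [IsTopologicalAddGroup E] [ContinuousSMul ℝ E] [T2Space E]
    {g : E → EReal} {x u : E}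
    (hg : ∀ t ∈ Icc (0 : ℝ) 1,
      g ((1 - t) • x + t • u) ≤ ((1 - t : ℝ) : EReal) * g x + (t : EReal) * g u)
    (hx_bot : ⊥ < g x) (hx_top : g x < ⊤) (hu_bot : ⊥ < g u) (hu_top : g u < ⊤) :
    UpperSemicontinuousWithinAt g (segment ℝ x u) x := by
  obtain ⟨a, ha⟩ : ∃ a : ℝ, (a : EReal) = g x := ⟨_, EReal.coe_toReal hx_top.ne hx_bot.ne'⟩
  obtain ⟨b, hb⟩ : ∃ b : ℝ, (b : EReal) = g u := ⟨_, EReal.coe_toReal hu_top.ne hu_bot.ne'⟩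
  intro y hy
  have hchord : Tendsto (fun t : ℝ => (((1 - t) * a + t * b : ℝ) : EReal)) (𝓝 0) (𝓝 (g x)) := by
    have : Continuous fun t : ℝ => (((1 - t) * a + t * b : ℝ) : EReal) :=
      continuous_coe_real_ereal.comp (by fun_prop)
    convert this.tendsto 0 using 2
    simp [ha]
  rw [nhdsWithin_segment_eq_map_lineMap, eventually_map]
  filter_upwards [(hchord.eventually_lt_const hy).filter_mono nhdsWithin_le_nhds,
    self_mem_nhdsWithin] with t hlt ht
  calc g (AffineMap.lineMap x u t) = g ((1 - t) • x + t • u) := by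
        rw [AffineMap.lineMap_apply_module]
    _ ≤ ((1 - t : ℝ) : EReal) * a + (t : EReal) * b := ha ▸ hb ▸ hg t ht
    _ = (((1 - t) * a + t * b : ℝ) : EReal) := by norm_cast
    _ < y := hlt

theorem le_of_eqOn_of_clusterPt {α β : Type*} [TopologicalSpace α] [LinearOrder β]
    [DenselyOrdered β] {f g : α → β} {s : Set α} {x : α} (hf : LowerSemicontinuousAt f x)
    (hg : UpperSemicontinuousWithinAt g s x) (hfg : EqOn f g s) (hx : ClusterPt x (𝓟 s)) :
    f x ≤ g x := by
  by_contra! hlt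
  obtain ⟨y, hgy, hyf⟩ := exists_between hlt
  have : (𝓝[s] x).NeBot := hx
  obtain ⟨z, hfz, hgz, hz⟩ := ((hf y hyf).filter_mono nhdsWithin_le_nhds |>.and
    ((hg y hgy).and self_mem_nhdsWithin)).exists
  exact lt_asymm hfz ((hfg hz).trans_lt hgz)

theorem eq_on_dom_of_eq_on_segmentDense_general
    {X : Type*} [AddCommGroup X] [Module ℝ X] [TopologicalSpace X]
    [IsTopologicalAddGroup X] [ContinuousSMul ℝ X] [T2Space X]
    (f g : X → EReal)
    (hfproper : (∃ x, f x < ⊤) ∧ ∀ x, ⊥ < f x)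
    (hgproper : (∃ x, g x < ⊤) ∧ ∀ x, ⊥ < g x)
    (hfconv : ∀ x y : X, ∀ t ∈ Set.Icc (0 : ℝ) 1,
      f ((1 - t) • x + t • y) ≤ ((1 - t : ℝ) : EReal) * f x + (t : EReal) * f y)
    (hgconv : ∀ x y : X, ∀ t ∈ Set.Icc (0 : ℝ) 1,
      g ((1 - t) • x + t • y) ≤ ((1 - t : ℝ) : EReal) * g x + (t : EReal) * g y)
    (hflsc : LowerSemicontinuous f) (hglsc : LowerSemicontinuous g)
    (U : Set X) (hU : U ⊆ {x | f x < ⊤} ∩ {x | g x < ⊤})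
    (hseg : ∀ v ∈ {x | f x < ⊤} ∩ {x | g x < ⊤}, ∃ u ∈ U,
      ClusterPt v (Filter.principal (segment ℝ v u ∩ U)))
    (heq : ∀ u ∈ U, f u = g u) :
    ∀ x ∈ {x | f x < ⊤} ∩ {x | g x < ⊤}, f x = g x := by
  intro x hx
  obtain ⟨u, huU, hcl⟩ := hseg x hx
  have hu := hU huU
  have hfg : EqOn f g (segment ℝ x u ∩ U) := fun z hz => heq z hz.2
  apply le_antisymm
  · exact le_of_eqOn_of_clusterPt (hflsc x)
      ((upperSemicontinuousWithinAt_segment_of_le_chord (hgconv x u) (hgproper.2 x) hx.2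
        (hgproper.2 u) hu.2).mono inter_subset_left) hfg hcl
  · exact le_of_eqOn_of_clusterPt (hglsc x)
      ((upperSemicontinuousWithinAt_segment_of_le_chord (hfconv x u) (hfproper.2 x) hx.1
        (hfproper.2 u) hu.1).mono inter_subset_left) hfg.symm hcl

/-- Proposition 3.6: let `f, g : X → ℝ ∪ {±∞}` be proper, convex and lower
semicontinuous functions on a Hausdorff locally convex topological vector space,
and `U ⊆ dom f ∩ dom g` segment-dense in `dom f ∩ dom g` with `f = g` on `U`.
Then `f = g` on `dom f ∩ dom g`. -/
theorem eq_on_dom_of_eq_on_segmentDense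
    {X : Type*} [AddCommGroup X] [Module ℝ X] [TopologicalSpace X]
    [IsTopologicalAddGroup X] [ContinuousSMul ℝ X] [LocallyConvexSpace ℝ X] [T2Space X]
    (f g : X → EReal)
    (hfproper : (∃ x, f x < ⊤) ∧ ∀ x, ⊥ < f x)
    (hgproper : (∃ x, g x < ⊤) ∧ ∀ x, ⊥ < g x)
    (hfconv : ∀ x y : X, ∀ t ∈ Set.Icc (0 : ℝ) 1,
      f ((1 - t) • x + t • y) ≤ ((1 - t : ℝ) : EReal) * f x + (t : EReal) * f y)
    (hgconv : ∀ x y : X, ∀ t ∈ Set.Icc (0 : ℝ) 1,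
      g ((1 - t) • x + t • y) ≤ ((1 - t : ℝ) : EReal) * g x + (t : EReal) * g y)
    (hflsc : LowerSemicontinuous f) (hglsc : LowerSemicontinuous g)
    (U : Set X) (hU : U ⊆ {x | f x < ⊤} ∩ {x | g x < ⊤})
    (hseg : ∀ v ∈ {x | f x < ⊤} ∩ {x | g x < ⊤}, ∃ u ∈ U,
      ClusterPt v (Filter.principal (segment ℝ v u ∩ U)))
    (heq : ∀ u ∈ U, f u = g u) :
    ∀ x ∈ {x | f x < ⊤} ∩ {x | g x < ⊤}, f x = g x :=
  eq_on_dom_of_eq_on_segmentDense_general f g hfproper hgproper hfconv hgconv hflsc hglsc U hU hseg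
    heq
end

section
/- Let X be a Hausdorff locally convex topological vector space, f : X → ℝ ∪ {±∞} proper, convex, and lower semicontinuous, and U ⊆ dom f self-segment-dense in dom f. Then f = f̄_U on conv(U); in particular inf_{x ∈ U} f(x) = inf_{x ∈ conv(U)} f(x). -/
open Set Filter Topology

/-!
Write `x ∈ conv U` as `∑ wᵢ uᵢ` with `uᵢ ∈ U` and all `wᵢ > 0`. Adding one vertex at a time,
self-segment-density shows that the weights `μ` in the standard simplex with `∑ μᵢ uᵢ ∈ U` are dense
in it. Close to `w`, such a `μ` splits as `(1 - b) w + b σ` with `σ` in the simplex and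
`b = ‖μ - w‖ / minᵢ wᵢ`, so convexity gives `f (∑ μᵢ uᵢ) ≤ (1 - b) f x + b maxᵢ f uᵢ`, which tends
to `f x`. Hence `(x, f x)` lies in the closure of the epigraph of `f` over `U`, i.e. `f̄_U x ≤ f x`;
the reverse inequality holds everywhere since `f` is lower semicontinuous.
-/

theorem convexOn_toReal_of_forall_le {X : Type*} [AddCommGroup X] [Module ℝ X] {f : X → EReal}
    (hbot : ∀ x, ⊥ < f x)
    (hconv : ∀ x y : X, ∀ t ∈ Icc (0 : ℝ) 1,
      f ((1 - t) • x + t • y) ≤ ((1 - t : ℝ) : EReal) * f x + (t : EReal) * f y) :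
    ConvexOn ℝ {x | f x < ⊤} fun x ↦ (f x).toReal := by
  have key : ∀ x y a b, f x < ⊤ → f y < ⊤ → 0 ≤ a → 0 ≤ b → a + b = 1 →
      f (a • x + b • y) ≤ ((a * (f x).toReal + b * (f y).toReal : ℝ) : EReal) := by
    intro x y a b hx hy ha hb hab
    obtain rfl : a = 1 - b := by linarith
    have := hconv x y b ⟨hb, by linarith⟩
    rwa [← EReal.coe_toReal hx.ne (hbot x).ne', ← EReal.coe_toReal hy.ne (hbot y).ne',
      ← EReal.coe_mul, ← EReal.coe_mul, ← EReal.coe_add] at this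
  refine ⟨fun x hx y hy a b ha hb hab ↦ (key x y a b hx hy ha hb hab).trans_lt
    (EReal.coe_lt_top _), fun x hx y hy a b ha hb hab ↦ ?_⟩
  exact (EReal.toReal_le_toReal (key x y a b hx hy ha hb hab) (hbot _).ne'
    (EReal.coe_ne_top _)).trans_eq (EReal.toReal_coe _)

theorem EReal.le_of_setOf_le_coe_subset {X : Type*} {f g : X → EReal}
    (h : {p : X × ℝ | g p.1 ≤ p.2} ⊆ {p | f p.1 ≤ p.2}) (x : X) : f x ≤ g x :=
  EReal.le_of_forall_lt_iff_le.mp fun r hr ↦ h (a := (x, r)) hr.le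

theorem LowerSemicontinuous.isClosed_setOf_le_coe {X : Type*} [TopologicalSpace X]
    {f : X → EReal} (hf : LowerSemicontinuous f) : IsClosed {p : X × ℝ | f p.1 ≤ p.2} :=
  hf.isClosed_epigraph.preimage <|
    continuous_fst.prodMk (continuous_coe_real_ereal.comp continuous_snd)

theorem biInf_le_of_mem_closure_epigraph {X : Type*} [TopologicalSpace X] {f : X → EReal}
    {U : Set X} {x : X} {r : ℝ}
    (h : (x, r) ∈ closure {p : X × ℝ | p.1 ∈ U ∧ f p.1 ≤ p.2}) : ⨅ y ∈ U, f y ≤ r := by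
  have hclosed : IsClosed {p : X × ℝ | ⨅ y ∈ U, f y ≤ p.2} :=
    isClosed_le continuous_const (continuous_coe_real_ereal.comp continuous_snd)
  exact closure_minimal (fun p hp ↦ (biInf_le f hp.1).trans hp.2) hclosed h

theorem exists_mem_stdSimplex_eq_smul_add_smul {ι : Type*} [Fintype ι] {w μ : ι → ℝ}
    (hμ : ∑ i, μ i = 1) (hw : ∑ i, w i = 1) {ρ : ℝ} (hρ : 0 < ρ) (hρw : ∀ i, ρ ≤ w i) :
    ∃ σ ∈ stdSimplex ℝ ι, μ = (1 - dist μ w / ρ) • w + (dist μ w / ρ) • σ := by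
  set b := dist μ w / ρ
  obtain hb | hb : b = 0 ∨ 0 < b := (div_nonneg dist_nonneg hρ.le).eq_or_lt'
  · have hμw : μ = w := dist_eq_zero.mp ((div_eq_zero_iff.mp hb).resolve_right hρ.ne')
    refine ⟨w, ⟨fun i ↦ hρ.le.trans (hρw i), hw⟩, ?_⟩
    rw [hb, hμw]
    simp
  · refine ⟨w + b⁻¹ • (μ - w), ⟨fun i ↦ ?_, ?_⟩, ?_⟩
    · -- `|μᵢ - wᵢ| ≤ dist μ w = b ρ ≤ b wᵢ`
      have hcoord : -dist μ w ≤ μ i - w i := by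
        have := dist_le_pi_dist μ w i
        rw [Real.dist_eq] at this
        linarith [neg_abs_le (μ i - w i)]
      have hbρ : b⁻¹ * dist μ w = ρ := by
        have : dist μ w ≠ 0 := fun h ↦ by simp [b, h] at hb
        simp only [b]; field_simp
      simp only [Pi.add_apply, Pi.smul_apply, Pi.sub_apply, smul_eq_mul]
      nlinarith [hρw i, inv_pos.mpr hb]
    · simp [Finset.sum_add_distrib, ← Finset.mul_sum, Finset.sum_sub_distrib, hμ, hw]
    · ext i
      simp only [Pi.add_apply, Pi.smul_apply, Pi.sub_apply, smul_eq_mul]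
      field_simp [hb.ne']
      ring

theorem ConvexOn.map_sum_smul_le_of_dist_le {X ι : Type*} [AddCommGroup X] [Module ℝ X]
    [Fintype ι] {s : Set X} {F : X → ℝ} (hF : ConvexOn ℝ s F) {u : ι → X} (hu : ∀ i, u i ∈ s)
    {M : ℝ} (hM : ∀ i, F (u i) ≤ M) {w μ : ι → ℝ} (hw : w ∈ stdSimplex ℝ ι)
    (hμ : ∑ i, μ i = 1) {ρ : ℝ} (hρ : 0 < ρ) (hρw : ∀ i, ρ ≤ w i) (hd : dist μ w ≤ ρ) :
    F (∑ i, μ i • u i) ≤ (1 - dist μ w / ρ) * F (∑ i, w i • u i) + dist μ w / ρ * M := by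
  obtain ⟨σ, hσ, hμσ⟩ := exists_mem_stdSimplex_eq_smul_add_smul hμ hw.2 hρ hρw
  set b := dist μ w / ρ
  have hb0 : 0 ≤ b := div_nonneg dist_nonneg hρ.le
  have hb1 : b ≤ 1 := (div_le_one hρ).mpr hd
  have hsum : ∑ i, μ i • u i = (1 - b) • ∑ i, w i • u i + b • ∑ i, σ i • u i := by
    simp only [hμσ, Pi.add_apply, Pi.smul_apply, smul_eq_mul, add_smul, mul_smul,
      Finset.sum_add_distrib, Finset.smul_sum]
  have hmem : ∀ ν ∈ stdSimplex ℝ ι, ∑ i, ν i • u i ∈ s := fun ν hν ↦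
    hF.1.sum_mem (fun i _ ↦ hν.1 i) hν.2 fun i _ ↦ hu i
  have hσM : F (∑ i, σ i • u i) ≤ M := calc
    F (∑ i, σ i • u i) ≤ ∑ i, σ i • F (u i) :=
      hF.map_sum_le (fun i _ ↦ hσ.1 i) hσ.2 fun i _ ↦ hu i
    _ ≤ ∑ i, σ i • M := Finset.sum_le_sum fun i _ ↦ smul_le_smul_of_nonneg_left (hM i) (hσ.1 i)
    _ = M := by rw [← Finset.sum_smul, hσ.2, one_smul]
  calc F (∑ i, μ i • u i)
      ≤ (1 - b) • F (∑ i, w i • u i) + b • F (∑ i, σ i • u i) := by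
        rw [hsum]; exact hF.2 (hmem w hw) (hmem σ hσ) (by linarith) hb0 (by ring)
    _ ≤ (1 - b) * F (∑ i, w i • u i) + b * M := by
        simp only [smul_eq_mul]; gcongr

theorem exists_fin_pos_sum_smul_eq_of_mem_convexHull {E : Type*} [AddCommGroup E]
    [Module ℝ E] {s : Set E} {x : E} (hx : x ∈ convexHull ℝ s) :
    ∃ (n : ℕ) (u : Fin n → E) (w : Fin n → ℝ), (∀ i, u i ∈ s) ∧ (∀ i, 0 < w i) ∧
      ∑ i, w i = 1 ∧ ∑ i, w i • u i = x := by
  obtain ⟨ι, _, z, w, hzs, -, hw0, hw1, hwz⟩ := eq_pos_convex_span_of_mem_convexHull hx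
  let e := Fintype.equivFin ι
  refine ⟨_, z ∘ e.symm, w ∘ e.symm, fun i ↦ hzs (mem_range_self _), fun i ↦ hw0 _, ?_, ?_⟩
  · rwa [← e.symm.sum_comp] at hw1
  · rwa [← e.symm.sum_comp] at hwz

theorem sum_snoc_smul_eq_lineMap {X : Type*} [AddCommGroup X] [Module ℝ X] {n : ℕ}
    (u : Fin (n + 1) → X) (μ : Fin n → ℝ) (s : ℝ) :
    ∑ i, (Fin.snoc ((1 - s) • μ) s : Fin (n + 1) → ℝ) i • u i =
      AffineMap.lineMap (∑ j, μ j • u j.castSucc) (u (Fin.last n)) s := by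
  simp [Fin.sum_univ_castSucc, AffineMap.lineMap_apply_module, Finset.smul_sum, mul_smul]

theorem snoc_smul_mem_stdSimplex {n : ℕ} {μ : Fin n → ℝ} (hμ : μ ∈ stdSimplex ℝ (Fin n))
    {s : ℝ} (hs : s ∈ Icc (0 : ℝ) 1) :
    (Fin.snoc ((1 - s) • μ) s : Fin (n + 1) → ℝ) ∈ stdSimplex ℝ (Fin (n + 1)) := by
  refine ⟨fun i ↦ ?_, ?_⟩
  · induction i using Fin.lastCases with
    | last => simpa using hs.1
    | cast j => simpa using mul_nonneg (sub_nonneg.mpr hs.2) (hμ.1 j)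
  · simp [Fin.sum_univ_castSucc, ← Finset.mul_sum, hμ.2]

theorem eq_single_or_exists_eq_snoc_of_mem_stdSimplex {n : ℕ} {w : Fin (n + 1) → ℝ}
    (hw : w ∈ stdSimplex ℝ (Fin (n + 1))) :
    w = Pi.single (Fin.last n) 1 ∨ ∃ w' ∈ stdSimplex ℝ (Fin n), ∃ t ∈ Icc (0 : ℝ) 1,
      w = Fin.snoc ((1 - t) • w') t := by
  have hsum := hw.2
  rw [Fin.sum_univ_castSucc] at hsum
  have hinit : 0 ≤ ∑ j : Fin n, w j.castSucc := Finset.sum_nonneg fun j _ ↦ hw.1 _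
  obtain hlast | hlast := (show w (Fin.last n) ≤ 1 by linarith).eq_or_lt
  · left
    have hzero := (Finset.sum_eq_zero_iff_of_nonneg fun (j : Fin n) _ ↦ hw.1 j.castSucc).mp
      (by linarith)
    ext i
    induction i using Fin.lastCases with
    | last => simpa using hlast
    | cast j => simpa [Fin.castSucc_ne_last] using hzero j (Finset.mem_univ j)
  · right
    have hpos : 0 < 1 - w (Fin.last n) := sub_pos.mpr hlast
    refine ⟨(1 - w (Fin.last n))⁻¹ • fun j ↦ w j.castSucc,
      ⟨fun j ↦ mul_nonneg (inv_nonneg.mpr hpos.le) (hw.1 _), ?_⟩,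
      w (Fin.last n), ⟨hw.1 _, hlast.le⟩, ?_⟩
    · simp only [Pi.smul_apply, smul_eq_mul, ← Finset.mul_sum]
      field_simp
      linarith
    · ext i
      induction i using Fin.lastCases with
      | last => simp
      | cast j => simp [hpos.ne']

section

variable {X : Type*} [AddCommGroup X] [Module ℝ X] [TopologicalSpace X]
  [IsTopologicalAddGroup X] [ContinuousSMul ℝ X] [T2Space X]

theorem Icc_subset_closure_setOf_lineMap_mem {U : Set X}
    (hU : ∀ x ∈ U, ∀ y ∈ U, segment ℝ x y ⊆ closure (segment ℝ x y ∩ U))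
    {a b : X} (ha : a ∈ U) (hb : b ∈ U) :
    Icc (0 : ℝ) 1 ⊆ closure {t ∈ Icc (0 : ℝ) 1 | AffineMap.lineMap a b t ∈ U} := by
  intro t ht
  obtain rfl | hab := eq_or_ne a b
  · exact subset_closure ⟨ht, by rwa [AffineMap.lineMap_same_apply]⟩
  let γ : Icc (0 : ℝ) 1 → X := fun t ↦ AffineMap.lineMap a b (t : ℝ)
  have hγ : IsClosedEmbedding γ :=
    (AffineMap.lineMap_continuous.comp continuous_subtype_val).isClosedEmbedding
      ((AffineMap.lineMap_injective ℝ hab).comp Subtype.val_injective)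
  have hrange : range γ = segment ℝ a b := by
    rw [segment_eq_image_lineMap, ← image_univ, ← image_image, image_univ, Subtype.range_coe]
  have : (⟨t, ht⟩ : Icc (0 : ℝ) 1) ∈ closure (γ ⁻¹' U) := by
    rw [hγ.closure_eq_preimage_closure_image, image_preimage_eq_range_inter, hrange]
    exact hU a ha b hb (hrange ▸ mem_range_self _)
  rw [closure_subtype] at this
  convert this using 2
  ext s
  simp [γ, and_comm]

theorem stdSimplex_subset_closure_setOf_sum_smul_mem {U : Set X}
    (hU : ∀ x ∈ U, ∀ y ∈ U, segment ℝ x y ⊆ closure (segment ℝ x y ∩ U)) {n : ℕ}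
    {u : Fin n → X} (hu : ∀ i, u i ∈ U) :
    stdSimplex ℝ (Fin n) ⊆ closure {μ ∈ stdSimplex ℝ (Fin n) | ∑ i, μ i • u i ∈ U} := by
  induction n with
  | zero => simp [stdSimplex_of_isEmpty_index]
  | succ n ih =>
    intro w hw
    obtain rfl | ⟨w', hw', t, ht, rfl⟩ := eq_single_or_exists_eq_snoc_of_mem_stdSimplex hw
    · exact subset_closure ⟨hw, by simpa using hu (Fin.last n)⟩
    set Λ := {μ ∈ stdSimplex ℝ (Fin n) | ∑ i, μ i • u i.castSucc ∈ U}
    set S := {p : (Fin n → ℝ) × ℝ | p.1 ∈ Λ ∧ p.2 ∈ Icc (0 : ℝ) 1 ∧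
      AffineMap.lineMap (∑ j, p.1 j • u j.castSucc) (u (Fin.last n)) p.2 ∈ U}
    have hS : Λ ×ˢ Icc (0 : ℝ) 1 ⊆ closure S := by
      rintro ⟨μ, s⟩ ⟨hμ, hs⟩
      refine map_mem_closure (Continuous.prodMk_right μ)
        (Icc_subset_closure_setOf_lineMap_mem hU hμ.2 (hu _) hs) fun s' hs' ↦ ⟨hμ, hs'⟩
    have hw'S : (w', t) ∈ closure S := by
      refine closure_minimal hS isClosed_closure ?_
      rw [closure_prod_eq, isClosed_Icc.closure_eq]
      exact ⟨ih (fun j ↦ hu _) hw', ht⟩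
    let snocWeights (p : (Fin n → ℝ) × ℝ) : Fin (n + 1) → ℝ := Fin.snoc ((1 - p.2) • p.1) p.2
    have hcont : Continuous snocWeights :=
      Continuous.finSnoc (A := fun _ ↦ ℝ) (by fun_prop) continuous_snd
    refine map_mem_closure (f := snocWeights) hcont hw'S ?_
    rintro ⟨μ, s⟩ ⟨hμ, hs, hμsU⟩
    exact ⟨snoc_smul_mem_stdSimplex hμ.1 hs, by rwa [sum_snoc_smul_eq_lineMap]⟩

theorem ConvexOn.mk_sum_smul_mem_closure_epigraph {s U : Set X} {F : X → ℝ}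
    (hF : ConvexOn ℝ s F) (hUs : U ⊆ s)
    (hU : ∀ x ∈ U, ∀ y ∈ U, segment ℝ x y ⊆ closure (segment ℝ x y ∩ U)) {n : ℕ}
    {u : Fin n → X} (hu : ∀ i, u i ∈ U) {w : Fin n → ℝ} (hw0 : ∀ i, 0 < w i)
    (hw1 : ∑ i, w i = 1) {r : ℝ} (hr : F (∑ i, w i • u i) ≤ r) :
    (∑ i, w i • u i, r) ∈ closure {p : X × ℝ | p.1 ∈ U ∧ F p.1 ≤ p.2} := by
  have : Nonempty (Fin n) := by
    by_contra h
    simp [not_nonempty_iff.mp h] at hw1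
  obtain ⟨i₀, hi₀⟩ := Finite.exists_min w
  set ρ := w i₀
  obtain ⟨M, hM⟩ := Finite.exists_le fun i ↦ F (u i)
  let Φ (μ : Fin n → ℝ) : X × ℝ :=
    (∑ i, μ i • u i, (1 - dist μ w / ρ) * r + dist μ w / ρ * M)
  have hΦ : Continuous Φ := by fun_prop
  set Λ := {μ ∈ stdSimplex ℝ (Fin n) | ∑ i, μ i • u i ∈ U}
  have hΛ : NeBot (𝓝[Λ] w) := mem_closure_iff_nhdsWithin_neBot.mp <|
    stdSimplex_subset_closure_setOf_sum_smul_mem hU hu ⟨fun i ↦ (hw0 i).le, hw1⟩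
  refine mem_closure_of_tendsto (b := 𝓝[Λ] w) (f := Φ) ?_ ?_
  · simpa [Φ] using (hΦ.tendsto w).mono_left (nhdsWithin_le_nhds (s := Λ))
  filter_upwards [self_mem_nhdsWithin,
    mem_nhdsWithin_of_mem_nhds (Metric.ball_mem_nhds w (hw0 i₀))] with μ ⟨hμ, hμU⟩ hμw
  refine ⟨hμU, ?_⟩
  have hd : dist μ w ≤ ρ := (Metric.mem_ball.mp hμw).le
  calc F (∑ i, μ i • u i) ≤ (1 - dist μ w / ρ) * F (∑ i, w i • u i) + dist μ w / ρ * M :=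
        hF.map_sum_smul_le_of_dist_le (fun i ↦ hUs (hu i)) hM ⟨fun i ↦ (hw0 i).le, hw1⟩ hμ.2
          (hw0 i₀) hi₀ hd
    _ ≤ (1 - dist μ w / ρ) * r + dist μ w / ρ * M := by
        gcongr
        exact sub_nonneg.mpr ((div_le_one (hw0 i₀)).mpr hd)

end

theorem eq_closure_epi_fn_on_convexHull_of_selfSegmentDense_general
    {X : Type*} [AddCommGroup X] [Module ℝ X] [TopologicalSpace X]
    [IsTopologicalAddGroup X] [ContinuousSMul ℝ X] [T2Space X]
    (f : X → EReal) (hproper : (∃ x, f x < ⊤) ∧ ∀ x, ⊥ < f x)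
    (hconv : ∀ x y : X, ∀ t ∈ Set.Icc (0 : ℝ) 1,
      f ((1 - t) • x + t • y) ≤ ((1 - t : ℝ) : EReal) * f x + (t : EReal) * f y)
    (hlsc : LowerSemicontinuous f)
    (U : Set X) (hU : U ⊆ {x | f x < ⊤})
    (hssd : ∀ x ∈ U, ∀ y ∈ U, segment ℝ x y ⊆ closure (segment ℝ x y ∩ U))
    (g : X → EReal)
    (hg : {p : X × ℝ | g p.1 ≤ (p.2 : EReal)} =
      closure {p : X × ℝ | p.1 ∈ U ∧ f p.1 ≤ (p.2 : EReal)}) :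
    (∀ x ∈ convexHull ℝ U, g x = f x) ∧
      (⨅ x ∈ U, f x) = ⨅ x ∈ convexHull ℝ U, f x := by
  set F : X → ℝ := fun x ↦ (f x).toReal
  have hF : ConvexOn ℝ {x | f x < ⊤} F := convexOn_toReal_of_forall_le hproper.2 hconv
  have hfF : ∀ x, f x < ⊤ → (F x : EReal) = f x := fun x hx ↦
    EReal.coe_toReal hx.ne (hproper.2 x).ne'
  have hhull : convexHull ℝ U ⊆ {x | f x < ⊤} := convexHull_min hU hF.1
  have hE : {p : X × ℝ | p.1 ∈ U ∧ f p.1 ≤ p.2} = {p | p.1 ∈ U ∧ F p.1 ≤ p.2} := by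
    ext p
    refine and_congr_right fun hp ↦ ?_
    rw [← hfF _ (hU hp), EReal.coe_le_coe_iff]
  have hmem : ∀ x ∈ convexHull ℝ U,
      (x, F x) ∈ closure {p : X × ℝ | p.1 ∈ U ∧ f p.1 ≤ p.2} := by
    intro x hx
    obtain ⟨n, u, w, hu, hw0, hw1, rfl⟩ := exists_fin_pos_sum_smul_eq_of_mem_convexHull hx
    rw [hE]
    exact hF.mk_sum_smul_mem_closure_epigraph hU hssd hu hw0 hw1 le_rfl
  have hfg : ∀ x, f x ≤ g x := EReal.le_of_setOf_le_coe_subset <|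
    hg ▸ closure_minimal (fun p hp ↦ hp.2) hlsc.isClosed_setOf_le_coe
  refine ⟨fun x hx ↦ le_antisymm ?_ (hfg x),
    le_antisymm ?_ (biInf_mono (subset_convexHull ℝ U))⟩
  · rw [← hfF x (hhull hx)]
    exact (hg ▸ hmem x hx : (x, F x) ∈ {p : X × ℝ | g p.1 ≤ p.2})
  · refine le_iInf₂ fun x hx ↦ ?_
    rw [← hfF x (hhull hx)]
    exact biInf_le_of_mem_closure_epigraph (hmem x hx)

/-- Proposition 3.8: let `f : X → ℝ ∪ {±∞}` be proper, convex and lower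
semicontinuous, and `U ⊆ dom f` self-segment-dense in `dom f`.  Then `f = f̄_U`
on `conv(U)`; in particular `inf_{x ∈ U} f(x) = inf_{x ∈ conv(U)} f(x)`. -/
theorem eq_closure_epi_fn_on_convexHull_of_selfSegmentDense
    {X : Type*} [AddCommGroup X] [Module ℝ X] [TopologicalSpace X]
    [IsTopologicalAddGroup X] [ContinuousSMul ℝ X] [LocallyConvexSpace ℝ X] [T2Space X]
    (f : X → EReal) (hproper : (∃ x, f x < ⊤) ∧ ∀ x, ⊥ < f x)
    (hconv : ∀ x y : X, ∀ t ∈ Set.Icc (0 : ℝ) 1,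
      f ((1 - t) • x + t • y) ≤ ((1 - t : ℝ) : EReal) * f x + (t : EReal) * f y)
    (hlsc : LowerSemicontinuous f)
    (U : Set X) (hU : U ⊆ {x | f x < ⊤}) (hdense : {x | f x < ⊤} ⊆ closure U)
    (hssd : ∀ x ∈ U, ∀ y ∈ U, segment ℝ x y ⊆ closure (segment ℝ x y ∩ U))
    (g : X → EReal)
    (hg : {p : X × ℝ | g p.1 ≤ (p.2 : EReal)} =
      closure {p : X × ℝ | p.1 ∈ U ∧ f p.1 ≤ (p.2 : EReal)}) :
    (∀ x ∈ convexHull ℝ U, g x = f x) ∧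
      (⨅ x ∈ U, f x) = ⨅ x ∈ convexHull ℝ U, f x :=
  eq_closure_epi_fn_on_convexHull_of_selfSegmentDense_general f hproper hconv hlsc U hU hssd g hg
end

section
/- Let X be an infinite-dimensional real Hilbert space with closed unit ball B, endowed with the weak topology, let U be the unit sphere, and f : B × B → ℝ, f(x,y) = ⟨x,y⟩. Then inf_{x ∈ U} sup_{y ∈ B} f(x,y) = 1 while sup_{y ∈ B} inf_{x ∈ U} f(x,y) = 0. Hence the minimax equality fails although U is weakly dense in the weakly compact convex set B and f is bilinear and separately weakly continuous in each variable on B. -/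
/-!
If `‖x‖ ≤ 1` and `(eₙ)` is an orthonormal sequence, the intermediate value theorem gives
`tₙ ∈ [0, 2]` with `‖x + tₙ eₙ‖ = 1`; since `eₙ → 0` weakly (Bessel) and `tₙ` is bounded,
`x + tₙ eₙ → x` weakly, so the sphere is weakly dense in the ball. The ball is weakly compact
because the Riesz isometry carries the weak-star compact dual ball (Banach–Alaoglu) onto it.
For the minimax values, `sup_{y ∈ B} ⟪x, y⟫ = ‖x‖` and `inf_{x ∈ U} ⟪x, y⟫ = -‖y‖`.
-/

open scoped RealInnerProductSpace
open Filter Topology Metric Set InnerProductSpace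

theorem tendsto_toWeakSpace_iff {𝕜 E α : Type*} [CommSemiring 𝕜] [TopologicalSpace 𝕜]
    [ContinuousAdd 𝕜] [ContinuousConstSMul 𝕜 𝕜] [AddCommMonoid E] [Module 𝕜 E]
    [TopologicalSpace E] {f : α → E} {l : Filter α} {x : E} :
    Tendsto (fun i => toWeakSpace 𝕜 E (f i)) l (𝓝 (toWeakSpace 𝕜 E x)) ↔
      ∀ φ : StrongDual 𝕜 E, Tendsto (fun i => φ (f i)) l (𝓝 (φ x)) := by
  have hind : IsInducing fun (y : WeakSpace 𝕜 E) (φ : StrongDual 𝕜 E) => φ y := ⟨rfl⟩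
  exact hind.tendsto_nhds_iff.trans tendsto_pi_nhds

theorem exists_mem_Icc_norm_add_smul_eq {E : Type*} [SeminormedAddCommGroup E] [NormedSpace ℝ E]
    {x v : E} {r : ℝ} (hx : ‖x‖ ≤ r) (hv : ‖v‖ = 1) :
    ∃ t ∈ Icc 0 (2 * r), ‖x + t • v‖ = r := by
  have hr : 0 ≤ 2 * r := by linarith [norm_nonneg x]
  have hcont : ContinuousOn (fun t : ℝ => ‖x + t • v‖) (Icc 0 (2 * r)) := by fun_prop
  have hend : r ≤ ‖x + (2 * r) • v‖ := by
    have := norm_sub_norm_le ((2 * r) • v) (-x)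
    rw [norm_smul, hv, norm_neg, sub_neg_eq_add, add_comm, Real.norm_of_nonneg hr] at this
    linarith
  exact intermediate_value_Icc hr hcont ⟨by simpa using hx, hend⟩

theorem toWeakSpace_closedBall_subset_closure_sphere {E : Type*} [NormedAddCommGroup E]
    [NormedSpace ℝ E] {e : ℕ → E} (he : ∀ n, ‖e n‖ = 1)
    (hnull : Tendsto (fun n => toWeakSpace ℝ E (e n)) atTop (𝓝 0)) (r : ℝ) :
    toWeakSpace ℝ E '' closedBall 0 r ⊆ closure (toWeakSpace ℝ E '' sphere 0 r) := by
  rintro _ ⟨x, hx, rfl⟩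
  choose t ht hnorm using fun n =>
    exists_mem_Icc_norm_add_smul_eq (mem_closedBall_zero_iff.1 hx) (he n)
  have ht_bdd : IsBoundedUnder (· ≤ ·) atTop (norm ∘ t) :=
    isBoundedUnder_of ⟨2 * r, fun n => by
      simpa [abs_of_nonneg (ht n).1] using (ht n).2⟩
  have hlim : Tendsto (fun n => toWeakSpace ℝ E (x + t n • e n)) atTop
      (𝓝 (toWeakSpace ℝ E x)) := by
    rw [← map_zero (toWeakSpace ℝ E)] at hnull
    refine tendsto_toWeakSpace_iff.2 fun φ => ?_
    have hφ : Tendsto (fun n => φ (e n)) atTop (𝓝 0) := by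
      simpa using tendsto_toWeakSpace_iff.1 hnull φ
    simpa using tendsto_const_nhds.add (isBoundedUnder_le_mul_tendsto_zero ht_bdd hφ)
  exact mem_closure_of_tendsto hlim (Eventually.of_forall fun n =>
    ⟨x + t n • e n, mem_sphere_zero_iff_norm.2 (hnorm n), rfl⟩)

theorem exists_orthonormal_nat_of_not_finiteDimensional {𝕜 X : Type*} [RCLike 𝕜]
    [NormedAddCommGroup X] [InnerProductSpace 𝕜 X] (h : ¬ FiniteDimensional 𝕜 X) :
    ∃ e : ℕ → X, Orthonormal 𝕜 e := by
  let b := Module.Basis.ofVectorSpace 𝕜 X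
  have : Infinite (Module.Basis.ofVectorSpaceIndex 𝕜 X) :=
    not_finite_iff_infinite.1 fun _ => h (Module.Finite.of_basis b)
  exact ⟨_, gramSchmidtNormed_orthonormal
    (b.linearIndependent.comp _ (Infinite.natEmbedding _).injective)⟩

theorem Orthonormal.tendsto_inner_zero {𝕜 X : Type*} [RCLike 𝕜] [NormedAddCommGroup X]
    [InnerProductSpace 𝕜 X] {e : ℕ → X} (he : Orthonormal 𝕜 e) (z : X) :
    Tendsto (fun n => inner 𝕜 (e n) z) atTop (𝓝 0) := by
  have := (he.inner_products_summable z).tendsto_atTop_zero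
  rw [tendsto_zero_iff_norm_tendsto_zero]
  simpa [Real.sqrt_sq (norm_nonneg _)] using this.sqrt

section RealInnerProductSpace

variable {X : Type*} [NormedAddCommGroup X] [InnerProductSpace ℝ X]

theorem Orthonormal.tendsto_toWeakSpace_zero [CompleteSpace X]
    {e : ℕ → X} (he : Orthonormal ℝ e) :
    Tendsto (fun n => toWeakSpace ℝ X (e n)) atTop (𝓝 0) := by
  rw [← map_zero (toWeakSpace ℝ X), tendsto_toWeakSpace_iff]
  intro φ
  simp only [← toDual_symm_apply (𝕜 := ℝ), inner_zero_right]
  simpa only [real_inner_comm] using he.tendsto_inner_zero ((toDual ℝ X).symm φ)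

theorem isCompact_toWeakSpace_closedBall [CompleteSpace X] (r : ℝ) :
    IsCompact (toWeakSpace ℝ X '' closedBall 0 r) := by
  let riesz : WeakDual ℝ X → WeakSpace ℝ X :=
    toWeakSpace ℝ X ∘ (toDual ℝ X).symm ∘ WeakDual.toStrongDual
  have hcont : Continuous riesz := by
    refine WeakBilin.continuous_of_continuous_eval _ fun ψ => ?_
    have h : ∀ φ : WeakDual ℝ X,
        ψ ((toDual ℝ X).symm (WeakDual.toStrongDual φ)) = φ ((toDual ℝ X).symm ψ) := by
      intro φ
      rw [← toDual_symm_apply (𝕜 := ℝ), real_inner_comm, toDual_symm_apply]; rfl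
    exact (WeakDual.eval_continuous _).congr fun φ => (h φ).symm
  have himage : riesz '' (WeakDual.toStrongDual ⁻¹' closedBall 0 r) =
      toWeakSpace ℝ X '' closedBall 0 r := by
    rw [image_comp, image_comp, image_preimage_eq _ WeakDual.toStrongDual.surjective,
      LinearIsometryEquiv.image_closedBall, map_zero]
  exact himage ▸ (WeakDual.isCompact_closedBall 0 r).image hcont

theorem biSup_closedBall_inner_eq_norm (x : X) :
    ⨆ y ∈ closedBall (0 : X) 1, (⟪x, y⟫ : EReal) = ‖x‖ := by
  apply le_antisymm
  · refine iSup₂_le fun y hy => EReal.coe_le_coe_iff.2 ?_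
    calc ⟪x, y⟫ ≤ ‖x‖ * ‖y‖ := real_inner_le_norm x y
      _ ≤ ‖x‖ := mul_le_of_le_one_right (norm_nonneg x) (mem_closedBall_zero_iff.1 hy)
  · refine le_iSup₂_of_le (‖x‖⁻¹ • x) ?_ (EReal.coe_le_coe_iff.2 ?_)
    · rw [mem_closedBall_zero_iff, norm_smul, norm_inv, norm_norm]
      exact inv_mul_le_one
    · rw [real_inner_smul_right, real_inner_self_eq_norm_sq, sq, ← mul_assoc, inv_mul_mul_self]

theorem biInf_sphere_inner_eq_neg_norm [Nontrivial X] (y : X) :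
    ⨅ x ∈ sphere (0 : X) 1, (⟪x, y⟫ : EReal) = ((-‖y‖ : ℝ) : EReal) := by
  apply le_antisymm
  · rcases eq_or_ne y 0 with rfl | hy
    · obtain ⟨x, hx⟩ := exists_norm_eq X zero_le_one
      exact iInf₂_le_of_le x (mem_sphere_zero_iff_norm.2 hx) (by simp)
    · refine iInf₂_le_of_le (-(‖y‖⁻¹ • y)) ?_ (EReal.coe_le_coe_iff.2 ?_)
      · rw [mem_sphere_zero_iff_norm, norm_neg]
        exact norm_smul_inv_norm (𝕜 := ℝ) hy
      · rw [inner_neg_left, real_inner_smul_left, real_inner_self_eq_norm_sq, sq, ← mul_assoc,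
          inv_mul_mul_self]
  · refine le_iInf₂ fun x hx => EReal.coe_le_coe_iff.2 ?_
    have := neg_abs_le ⟪x, y⟫
    have := abs_real_inner_le_norm x y
    rw [mem_sphere_zero_iff_norm.1 hx, one_mul] at this
    linarith

end RealInnerProductSpace

/-- Example 4.3: in an infinite-dimensional real Hilbert space with the weak topology,
for `K = Y = B` the closed unit ball, `U` the unit sphere, and `f(x,y) = ⟪x,y⟫`,
one has `inf_{x ∈ U} sup_{y ∈ B} f(x,y) = 1` while `sup_{y ∈ B} inf_{x ∈ U} f(x,y) = 0`,
although `U` is weakly dense in the weakly compact convex set `B`.  Hence the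
minimax equality fails on plain dense sets. -/
theorem minimax_fails_on_dense_sphere
    {X : Type*} [NormedAddCommGroup X] [InnerProductSpace ℝ X] [CompleteSpace X]
    (hinf : ¬ FiniteDimensional ℝ X) :
    (toWeakSpace ℝ X '' {x : X | ‖x‖ ≤ 1} ⊆
        closure (toWeakSpace ℝ X '' {x : X | ‖x‖ = 1})) ∧
      IsCompact (toWeakSpace ℝ X '' {x : X | ‖x‖ ≤ 1}) ∧
      (⨅ x ∈ {x : X | ‖x‖ = 1}, ⨆ y ∈ {y : X | ‖y‖ ≤ 1}, (⟪x, y⟫ : EReal)) = 1 ∧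
      (⨆ y ∈ {y : X | ‖y‖ ≤ 1}, ⨅ x ∈ {x : X | ‖x‖ = 1}, (⟪x, y⟫ : EReal)) = 0 := by
  have hB : {x : X | ‖x‖ ≤ 1} = closedBall 0 1 := by ext; simp
  have hU : {x : X | ‖x‖ = 1} = sphere 0 1 := by ext; simp
  obtain ⟨e, he⟩ := exists_orthonormal_nat_of_not_finiteDimensional hinf
  have : Nontrivial X := nontrivial_of_ne (e 0) 0 (he.ne_zero 0)
  rw [hB, hU]
  refine ⟨toWeakSpace_closedBall_subset_closure_sphere he.1 he.tendsto_toWeakSpace_zero 1,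
    isCompact_toWeakSpace_closedBall 1, ?_, ?_⟩
  · simp only [biSup_closedBall_inner_eq_norm]
    calc ⨅ x ∈ sphere (0 : X) 1, ((‖x‖ : ℝ) : EReal)
        = ⨅ x ∈ sphere (0 : X) 1, (1 : EReal) :=
          biInf_congr fun x hx => by rw [mem_sphere_zero_iff_norm.1 hx, EReal.coe_one]
      _ = 1 := biInf_const ⟨e 0, mem_sphere_zero_iff_norm.2 (he.1 0)⟩
  · simp only [biInf_sphere_inner_eq_neg_norm]
    refine le_antisymm (iSup₂_le fun y _ => ?_) (le_iSup₂_of_le 0 (by simp) (by simp))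
    exact EReal.coe_nonpos.2 (neg_nonpos.2 (norm_nonneg y))
end

section
/- Let K be a nonempty compact convex subset of a Hausdorff locally convex topological vector space X, Y a nonempty set, U ⊆ K dense in K, and f : K × Y → ℝ such that (i) x ↦ f(x,y) is convex on K for each y ∈ Y, (ii) y ↦ f(x,y) is concavelike for each x ∈ K, (iii) the family {f(·,y)}_{y∈Y} is equicontinuous on K, and (iv) sup_{y∈Y} f(x,y) < ∞ for every x ∈ K. Then inf_{x∈U} sup_{y∈Y} f(x,y) = sup_{y∈Y} inf_{x∈U} f(x,y). -/
/-!
Equicontinuity carries the strict bound `r₁ < sup_y f(u, y)` from the dense set `U` to every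
`x ∈ K`, at the price of lowering `r₁` to any `r < r₁`, and compactness of `K` then yields finitely
many `y` with `max_y f(x, y) > r` on `K`. The concavelike condition merges these `y`, two at a time,
into a single `y₀` with `f(·, y₀) ≥ r` on `K`. The merging step is a separation in `ℝ²`: if
`max (f₁, f₂) ≥ c` on `K` for convex `f₁, f₂`, the convex set of points dominating some
`(f₁ x, f₂ x)` misses the open quadrant below `(c, c)`, and the normalised separating functional
gives weights `(1 - t, t)` with `(1 - t) f₁ + t f₂ ≥ c` on `K`.
-/

open scoped Topology
open Set

theorem nonneg_of_forall_le_add_mul {a b α : ℝ} (h : ∀ M : ℝ, 0 ≤ M → a ≤ b + M * α) :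
    0 ≤ α := by
  by_contra! hα
  have hab := h 0 le_rfl
  have := h ((b - a + 1) / -α) (div_nonneg (by linarith) (by linarith))
  rw [div_mul_eq_mul_div, div_neg, mul_div_cancel_right₀ _ hα.ne] at this
  linarith

def ConcavelikeOn {E Y : Type*} (K : Set E) (f : E → Y → ℝ) : Prop :=
  ∀ y₁ y₂ : Y, ∀ t ∈ Icc (0 : ℝ) 1, ∃ y₃ : Y, ∀ x ∈ K, (1 - t) * f x y₁ + t * f x y₂ ≤ f x y₃

theorem ConcavelikeOn.mono {E Y : Type*} {K K' : Set E} {f : E → Y → ℝ} (h : ConcavelikeOn K f)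
    (hK' : K' ⊆ K) : ConcavelikeOn K' f := fun y₁ y₂ t ht =>
  (h y₁ y₂ t ht).imp fun _ hy₃ x hx => hy₃ x (hK' hx)

theorem ContinuousLinearMap.apply_real_prod (φ : ℝ × ℝ →L[ℝ] ℝ) (p : ℝ × ℝ) :
    φ p = p.1 * φ (1, 0) + p.2 * φ (0, 1) := by
  conv_lhs => rw [show p = p.1 • ((1 : ℝ), (0 : ℝ)) + p.2 • ((0 : ℝ), (1 : ℝ)) by ext <;> simp]
  rw [map_add, map_smul, map_smul, smul_eq_mul, smul_eq_mul]

section Convex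

variable {E : Type*} [AddCommGroup E] [Module ℝ E]

theorem ConvexOn.convex_setOf_exists_le_prod {K : Set E} {f₁ f₂ : E → ℝ}
    (h₁ : ConvexOn ℝ K f₁) (h₂ : ConvexOn ℝ K f₂) :
    Convex ℝ {p : ℝ × ℝ | ∃ x ∈ K, f₁ x ≤ p.1 ∧ f₂ x ≤ p.2} := by
  rintro p ⟨x, hx, hx₁, hx₂⟩ q ⟨y, hy, hy₁, hy₂⟩ a b ha hb hab
  refine ⟨a • x + b • y, h₁.1 hx hy ha hb hab, ?_, ?_⟩
  · calc f₁ (a • x + b • y) ≤ a * f₁ x + b * f₁ y := h₁.2 hx hy ha hb hab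
      _ ≤ (a • p + b • q).1 := by simp only [Prod.fst_add, Prod.smul_fst, smul_eq_mul]; gcongr
  · calc f₂ (a • x + b • y) ≤ a * f₂ x + b * f₂ y := h₂.2 hx hy ha hb hab
      _ ≤ (a • p + b • q).2 := by simp only [Prod.snd_add, Prod.smul_snd, smul_eq_mul]; gcongr

theorem ConvexOn.exists_le_convexComb_of_le_max {K : Set E} {f₁ f₂ : E → ℝ}
    (h₁ : ConvexOn ℝ K f₁) (h₂ : ConvexOn ℝ K f₂) {c : ℝ}
    (hc : ∀ x ∈ K, c ≤ max (f₁ x) (f₂ x)) :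
    ∃ t ∈ Icc (0 : ℝ) 1, ∀ x ∈ K, c ≤ (1 - t) * f₁ x + t * f₂ x := by
  rcases K.eq_empty_or_nonempty with rfl | ⟨x₀, hx₀⟩
  · exact ⟨0, left_mem_Icc.2 zero_le_one, by simp⟩
  have hdisj : Disjoint (Iio c ×ˢ Iio c) {p : ℝ × ℝ | ∃ x ∈ K, f₁ x ≤ p.1 ∧ f₂ x ≤ p.2} := by
    refine disjoint_left.2 fun p ⟨hp₁, hp₂⟩ ⟨x, hx, hx₁, hx₂⟩ => ?_
    rcases le_max_iff.1 (hc x hx) with h | h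
    · exact absurd hp₁ (not_lt.2 (h.trans hx₁))
    · exact absurd hp₂ (not_lt.2 (h.trans hx₂))
  obtain ⟨φ, s, hQ, hAs⟩ := geometric_hahn_banach_open ((convex_Iio c).prod (convex_Iio c))
    (isOpen_Iio.prod isOpen_Iio) (h₁.convex_setOf_exists_le_prod h₂) hdisj
  set α := φ (1, 0)
  set β := φ (0, 1)
  have hφ : ∀ p : ℝ × ℝ, φ p = p.1 * α + p.2 * β := φ.apply_real_prod
  have hAx : ∀ x ∈ K, s ≤ f₁ x * α + f₂ x * β := fun x hx => by
    simpa only [hφ] using hAs (f₁ x, f₂ x) ⟨x, hx, le_rfl, le_rfl⟩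
  -- The dominating set is stable under raising either coordinate, so both weights are `≥ 0`.
  have hα : 0 ≤ α := nonneg_of_forall_le_add_mul (a := s) (b := f₁ x₀ * α + f₂ x₀ * β)
    fun M hM => by
      have := hAs (f₁ x₀ + M, f₂ x₀) ⟨x₀, hx₀, by simpa, le_rfl⟩
      rw [hφ] at this
      linarith
  have hβ : 0 ≤ β := nonneg_of_forall_le_add_mul (a := s) (b := f₁ x₀ * α + f₂ x₀ * β)
    fun M hM => by
      have := hAs (f₁ x₀, f₂ x₀ + M) ⟨x₀, hx₀, le_rfl, by simpa⟩
      rw [hφ] at this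
      linarith
  have hcs : c * α + c * β ≤ s := by
    have : φ (c, c) ≤ s := closure_lt_subset_le φ.continuous continuous_const
      (closure_mono (fun q hq => hQ q hq) (by
        rw [closure_prod_eq, closure_Iio]; exact ⟨mem_Iic.2 le_rfl, mem_Iic.2 le_rfl⟩))
    simpa [hφ] using this
  have hαβ : 0 < α + β := by
    by_contra! h
    have hα₀ : α = 0 := by linarith
    have hβ₀ : β = 0 := by linarith
    have hQc := hQ (c - 1, c - 1) ⟨sub_one_lt c, sub_one_lt c⟩
    have hAx₀ := hAx x₀ hx₀
    rw [hφ, hα₀, hβ₀] at hQc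
    rw [hα₀, hβ₀] at hAx₀
    linarith
  refine ⟨β / (α + β), ⟨by positivity, div_le_one_of_le₀ (by linarith) hαβ.le⟩, fun x hx => ?_⟩
  rw [one_sub_div hαβ.ne', add_sub_cancel_right, div_mul_eq_mul_div, div_mul_eq_mul_div,
    ← add_div, le_div_iff₀ hαβ]
  linarith [hAx x hx]

theorem ConcavelikeOn.exists_forall_le_of_finset {Y : Type*} [Nonempty Y] {f : E → Y → ℝ}
    {c : ℝ} (s : Finset Y) {K : Set E} (hconc : ConcavelikeOn K f)
    (hconv : ∀ y, ConvexOn ℝ K (fun x => f x y)) (hs : ∀ x ∈ K, ∃ y ∈ s, c ≤ f x y) :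
    ∃ y₀, ∀ x ∈ K, c ≤ f x y₀ := by
  classical
  induction s using Finset.induction_on generalizing K with
  | empty =>
    refine ⟨Classical.arbitrary Y, fun x hx => ?_⟩
    obtain ⟨y, hy, -⟩ := hs x hx
    exact absurd hy (Finset.notMem_empty y)
  | @insert a s _ ih =>
    have hsub : {x ∈ K | f x a < c} ⊆ K := sep_subset _ _
    obtain ⟨y', hy'⟩ := ih (hconc.mono hsub)
      (fun y => (hconv y).subset hsub ((hconv a).convex_lt c)) fun x ⟨hx, hxa⟩ => by
        obtain ⟨y, hy, hcy⟩ := hs x hx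
        rcases Finset.mem_insert.1 hy with rfl | hy
        · exact absurd hcy (not_le.2 hxa)
        · exact ⟨y, hy, hcy⟩
    have hmax : ∀ x ∈ K, c ≤ max (f x y') (f x a) := fun x hx => by
      by_cases hxa : f x a < c
      · exact le_max_of_le_left (hy' x ⟨hx, hxa⟩)
      · exact le_max_of_le_right (not_lt.1 hxa)
    obtain ⟨t, ht, hct⟩ := (hconv y').exists_le_convexComb_of_le_max (hconv a) hmax
    obtain ⟨y₃, hy₃⟩ := hconc y' a t ht
    exact ⟨y₃, fun x hx => (hct x hx).trans (hy₃ x hx)⟩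

end Convex

section Topology

variable {X ι : Type*} [TopologicalSpace X]

theorem IsCompact.exists_finset_forall_exists_lt {K : Set X} (hK : IsCompact K)
    {F : ι → X → ℝ} (hF : ∀ i, ContinuousOn (F i) K) {c : ℝ} (hc : ∀ x ∈ K, ∃ i, c < F i x) :
    ∃ s : Finset ι, ∀ x ∈ K, ∃ i ∈ s, c < F i x := by
  choose O hO hOK using fun i => continuousOn_iff'.1 (hF i) (Ioi c) isOpen_Ioi
  obtain ⟨s, hs⟩ := hK.elim_finite_subcover O hO fun x hx => by
    obtain ⟨i, hi⟩ := hc x hx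
    exact mem_iUnion.2 ⟨i, ((hOK i).subset ⟨hi, hx⟩).1⟩
  refine ⟨s, fun x hx => ?_⟩
  obtain ⟨i, hi, hxi⟩ := mem_iUnion₂.1 (hs hx)
  exact ⟨i, hi, ((hOK i).symm.subset ⟨hxi, hx⟩).1⟩

theorem EquicontinuousWithinAt.exists_lt_of_mem_closure {F : ι → X → ℝ} {K U : Set X} {x : X}
    (hF : EquicontinuousWithinAt F K x) (hUK : U ⊆ K) (hx : x ∈ closure U) {r r' : ℝ}
    (hU : ∀ u ∈ U, ∃ i, r < F i u) (hr : r' < r) : ∃ i, r' < F i x := by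
  have hnear := Metric.uniformity_basis_dist.equicontinuousWithinAt_iff_right.1 hF (r - r')
    (sub_pos.2 hr)
  have := mem_closure_iff_nhdsWithin_neBot.1 hx
  obtain ⟨u, hu, huU⟩ :=
    (Filter.Eventually.and (nhdsWithin_mono x hUK hnear) self_mem_nhdsWithin).exists
  obtain ⟨i, hi⟩ := hU u huU
  have hdist : dist (F i x) (F i u) < r - r' := hu i
  rw [Real.dist_eq, abs_lt] at hdist
  exact ⟨i, by linarith [hdist.1]⟩

end Topology

theorem minimax_dense_of_equicontinuous_general
    {X : Type*} [AddCommGroup X] [Module ℝ X] [TopologicalSpace X]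
    (K : Set X) (hKcpt : IsCompact K)
    {Y : Type*} [Nonempty Y]
    (U : Set X) (hUK : U ⊆ K) (hdense : K ⊆ closure U)
    (f : X → Y → ℝ)
    (hconv : ∀ y : Y, ConvexOn ℝ K (fun x => f x y))
    (hconc : ∀ y₁ y₂ : Y, ∀ t ∈ Set.Icc (0 : ℝ) 1, ∃ y₃ : Y,
      ∀ x ∈ K, (1 - t) * f x y₁ + t * f x y₂ ≤ f x y₃)
    (hequi : ∀ x ∈ K, ∀ ε > (0 : ℝ), ∃ V ∈ 𝓝 x, ∀ z ∈ V ∩ K, ∀ y : Y,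
      |f z y - f x y| < ε) :
    (⨅ x ∈ U, ⨆ y : Y, (f x y : EReal)) = ⨆ y : Y, ⨅ x ∈ U, (f x y : EReal) := by
  have hequi' : EquicontinuousOn (fun y x => f x y) K := fun x hx =>
    Metric.uniformity_basis_dist.equicontinuousWithinAt_iff_right.2 fun ε hε => by
      obtain ⟨V, hV, hVε⟩ := hequi x hx ε hε
      filter_upwards [inter_mem_nhdsWithin K hV] with z hz y
      simpa [Real.dist_eq, abs_sub_comm] using hVε z ⟨hz.2, hz.1⟩ y
  refine le_antisymm (EReal.ge_of_forall_gt_iff_ge.1 fun r hr => ?_) (iSup_le fun y =>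
    le_iInf₂ fun x hx => (iInf₂_le x hx).trans (le_iSup (fun y' => (f x y' : EReal)) y))
  obtain ⟨r₁, hr₁, hr₁U⟩ := EReal.lt_iff_exists_real_btwn.1 hr
  have hU : ∀ u ∈ U, ∃ y, r₁ < f u y := fun u hu => by
    obtain ⟨y, hy⟩ := lt_iSup_iff.1 (hr₁U.trans_le (iInf₂_le u hu))
    exact ⟨y, EReal.coe_lt_coe_iff.1 hy⟩
  have hK : ∀ x ∈ K, ∃ y, r < f x y := fun x hx =>
    (hequi' x hx).exists_lt_of_mem_closure hUK (hdense hx) hU (EReal.coe_lt_coe_iff.1 hr₁)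
  obtain ⟨s, hs⟩ := hKcpt.exists_finset_forall_exists_lt hequi'.continuousOn hK
  obtain ⟨y₀, hy₀⟩ := ConcavelikeOn.exists_forall_le_of_finset s hconc hconv fun x hx =>
    (hs x hx).imp fun _ ⟨hy, hry⟩ => ⟨hy, hry.le⟩
  exact (le_iInf₂ fun x hx => EReal.coe_le_coe_iff.2 (hy₀ x (hUK hx))).trans
    (le_iSup (fun y => ⨅ x ∈ U, (f x y : EReal)) y₀)

/-- Theorem 4.8: let `K` be a nonempty compact convex subset of a Hausdorff locally
convex topological vector space, `Y` a nonempty set, `U ⊆ K` dense in `K`, and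
`f : K × Y → ℝ` with `x ↦ f(x,y)` convex on `K` for each `y`, `y ↦ f(x,y)`
concavelike, the family `{f(·,y)}_{y∈Y}` equicontinuous on `K`, and
`sup_{y∈Y} f(x,y) < ∞` for every `x ∈ K`.  Then
`inf_{x∈U} sup_{y∈Y} f(x,y) = sup_{y∈Y} inf_{x∈U} f(x,y)`. -/
theorem minimax_dense_of_equicontinuous
    {X : Type*} [AddCommGroup X] [Module ℝ X] [TopologicalSpace X]
    [IsTopologicalAddGroup X] [ContinuousSMul ℝ X] [LocallyConvexSpace ℝ X] [T2Space X]
    (K : Set X) (hKcpt : IsCompact K) (hKconv : Convex ℝ K) (hKne : K.Nonempty)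
    {Y : Type*} [Nonempty Y]
    (U : Set X) (hUK : U ⊆ K) (hdense : K ⊆ closure U)
    (f : X → Y → ℝ)
    (hconv : ∀ y : Y, ConvexOn ℝ K (fun x => f x y))
    (hconc : ∀ y₁ y₂ : Y, ∀ t ∈ Set.Icc (0 : ℝ) 1, ∃ y₃ : Y,
      ∀ x ∈ K, (1 - t) * f x y₁ + t * f x y₂ ≤ f x y₃)
    (hequi : ∀ x ∈ K, ∀ ε > (0 : ℝ), ∃ V ∈ 𝓝 x, ∀ z ∈ V ∩ K, ∀ y : Y,
      |f z y - f x y| < ε)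
    (hbdd : ∀ x ∈ K, BddAbove (Set.range fun y : Y => f x y)) :
    (⨅ x ∈ U, ⨆ y : Y, (f x y : EReal)) = ⨆ y : Y, ⨅ x ∈ U, (f x y : EReal) :=
  minimax_dense_of_equicontinuous_general K hKcpt U hUK hdense f hconv hconc hequi
end
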